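/- arXiv:1712.06051 — 10 statements merged into one kernel-verified Lean document; each statement's English description precedes it below -/
import Mathlib

section
/- Let A be a finite dimensional graded symmetric algebra over a field K admitting homogeneous symmetrizing traces τ of degree d and ρ of degree d'. If A is in addition a graded cellular algebra and d ≠ 0, then d = d'. (More precisely: any two homogeneous symmetrizing traces on a finite dimensional graded symmetric cellular algebra have the same degree.) -/
open scoped Classical

/-!
If `τ` is nondegenerate, every linear form is `τ (u * ·)` for some `u`; for `ρ` this `u` can be
replaced by its homogeneous component `v` of degree `d' - d`, since both traces are homogeneous.
Nondegeneracy of `ρ` makes `v` left regular, so no power of `v` vanishes. But a homogeneous element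
of nonzero degree in a finite dimensional `ℤ`-graded algebra is nilpotent, because its nonzero
powers lie in distinct graded pieces and are therefore linearly independent. Hence `d' - d = 0`.
-/

section Graded

variable {ι K A : Type*} [AddCommGroup ι] [DecidableEq ι] [Field K] [Ring A] [Algebra K A]
  (𝒜 : ι → Submodule K A) [GradedAlgebra 𝒜]

theorem isNilpotent_of_mem_graded [IsAddTorsionFree ι] [FiniteDimensional K A] {k : ι}
    (hk : k ≠ 0) {v : A} (hv : v ∈ 𝒜 k) : IsNilpotent v := by
  by_contra hnil
  have hpow_ne : ∀ n : ℕ, v ^ n ≠ 0 := fun n h => hnil ⟨n, h⟩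
  have hdeg : Function.Injective fun n : ℕ => n • k := by
    simpa only [Function.comp_def, natCast_zsmul] using
      (smul_left_injective ℤ hk).comp Nat.cast_injective
  have hindep : iSupIndep fun n : ℕ => 𝒜 (n • k) :=
    (DirectSum.Decomposition.isInternal 𝒜).submodule_iSupIndep.comp hdeg
  exact Module.Finite.not_linearIndependent_of_infinite _
    (hindep.linearIndependent _ (fun n => SetLike.pow_mem_graded n hv) hpow_ne)

variable {𝒜}

theorem apply_decompose_mul_eq_apply_mul {τ : A →ₗ[K] K} {e : ι}
    (hτ : ∀ i, i ≠ e → ∀ a ∈ 𝒜 i, τ a = 0) (u : A) {i j : ι} (hij : i + j = e) {m : A}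
    (hm : m ∈ 𝒜 j) : τ (DirectSum.decompose 𝒜 u i * m) = τ (u * m) := by
  conv_rhs => rw [← DirectSum.sum_support_decompose 𝒜 u]
  rw [Finset.sum_mul, map_sum, Finset.sum_eq_single i]
  · intro i' _ hi'
    exact hτ _ (fun h => hi' (add_right_cancel (h.trans hij.symm))) _
      (SetLike.mul_mem_graded (SetLike.coe_mem _) hm)
  · intro hi
    rw [DFinsupp.notMem_support_iff.mp hi, ZeroMemClass.coe_zero, zero_mul, map_zero]

theorem apply_decompose_mul_eq_of_homogeneous {τ ρ : A →ₗ[K] K} {d d' : ι}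
    (hτ : ∀ i, i ≠ -d → ∀ a ∈ 𝒜 i, τ a = 0) (hρ : ∀ i, i ≠ -d' → ∀ a ∈ 𝒜 i, ρ a = 0)
    {u : A} (hu : ∀ a, τ (u * a) = ρ a) (a : A) :
    τ (DirectSum.decompose 𝒜 u (d' - d) * a) = ρ a := by
  induction a using DirectSum.Decomposition.inductionOn 𝒜 with
  | zero => simp
  | add x y hx hy => rw [mul_add, map_add, map_add, hx, hy]
  | @homogeneous j m =>
    by_cases hj : j = -d'
    · subst hj
      rw [apply_decompose_mul_eq_apply_mul hτ u (by abel) m.2, hu]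
    · rw [hρ j hj _ m.2]
      refine hτ _ (fun h => hj ?_) _ (SetLike.mul_mem_graded (SetLike.coe_mem _) m.2)
      rw [← sub_eq_zero] at h ⊢
      rw [← h]
      abel

end Graded

theorem exists_apply_mul_eq_of_nondegenerate {K A : Type*} [Field K] [Ring A] [Algebra K A]
    [FiniteDimensional K A] {τ : A →ₗ[K] K} (hτ : ∀ a : A, a ≠ 0 → ∃ b : A, τ (a * b) ≠ 0)
    (ρ : A →ₗ[K] K) : ∃ u : A, ∀ a, τ (u * a) = ρ a := by
  let Φ : A →ₗ[K] Module.Dual K A := (LinearMap.mul K A).compr₂ τ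
  have hΦ : Function.Injective Φ := by
    refine (injective_iff_map_eq_zero Φ).mpr fun u hu => ?_
    by_contra hu0
    obtain ⟨b, hb⟩ := hτ u hu0
    exact hb (LinearMap.congr_fun hu b)
  obtain ⟨u, hu⟩ := (LinearMap.injective_iff_surjective_of_finrank_eq_finrank
    Subspace.dual_finrank_eq.symm).mp hΦ ρ
  exact ⟨u, LinearMap.congr_fun hu⟩

theorem isLeftRegular_of_apply_mul_eq {K A : Type*} [Field K] [Ring A] [Algebra K A]
    {τ ρ : A →ₗ[K] K} (hρ : ∀ a : A, a ≠ 0 → ∃ b : A, ρ (a * b) ≠ 0) {v : A}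
    (hv : ∀ a, τ (v * a) = ρ a) : IsLeftRegular v := by
  intro b c hbc
  by_contra hne
  obtain ⟨e, he⟩ := hρ (b - c) (sub_ne_zero.mpr hne)
  apply he
  rw [← hv, ← mul_assoc, mul_sub, sub_eq_zero.mpr hbc, zero_mul, map_zero]

/-- Theorem 3.4(1): two homogeneous symmetrizing traces on a finite dimensional
graded symmetric cellular algebra have the same degree, provided one degree is nonzero. -/
theorem stmt2
    {K A : Type} [Field K] [Ring A] [Algebra K A] [FiniteDimensional K A]
    {Λ : Type} [PartialOrder Λ] [Fintype Λ]
    {M : Λ → Type} [∀ l : Λ, Fintype (M l)]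
    (C : ∀ l : Λ, M l → M l → A)
    (bas : Module.Basis (Σ l : Λ, M l × M l) K A)
    (hbas : ∀ (l : Λ) (S T : M l), bas ⟨l, (S, T)⟩ = C l S T)
    (star : A →ₗ[K] A)
    (hstar : ∀ a b : A, star (a * b) = star b * star a)
    (hstarC : ∀ (l : Λ) (S T : M l), star (C l S T) = C l T S)
    (hcell : ∀ (a : A) (l : Λ), ∃ r : M l → M l → K, ∀ S T : M l,
      a * C l S T - ∑ S' : M l, r S' S • C l S' T ∈
        Submodule.span K {x : A | ∃ μ : Λ, μ < l ∧ ∃ U V : M μ, x = C μ U V})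
    [Nontrivial A]
    (𝒜 : ℤ → Submodule K A) [GradedAlgebra 𝒜]
    (deg : ∀ l : Λ, M l → ℤ)
    (hhom : ∀ (l : Λ) (S T : M l), C l S T ∈ 𝒜 (deg l S + deg l T))
    (τ ρ : A →ₗ[K] K)
    (hτsym : ∀ a b : A, τ (a * b) = τ (b * a))
    (hτnd : ∀ a : A, a ≠ 0 → ∃ b : A, τ (a * b) ≠ 0)
    (hρsym : ∀ a b : A, ρ (a * b) = ρ (b * a))
    (hρnd : ∀ a : A, a ≠ 0 → ∃ b : A, ρ (a * b) ≠ 0)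
    (d d' : ℤ)
    (hτhom : ∀ i : ℤ, i ≠ -d → ∀ a ∈ 𝒜 i, τ a = 0)
    (hρhom : ∀ i : ℤ, i ≠ -d' → ∀ a ∈ 𝒜 i, ρ a = 0)
    (hd : d ≠ 0) :
    d = d' := by
  by_contra hne
  obtain ⟨u, hu⟩ := exists_apply_mul_eq_of_nondegenerate hτnd ρ
  have hv : ∀ a, τ (DirectSum.decompose 𝒜 u (d' - d) * a) = ρ a :=
    apply_decompose_mul_eq_of_homogeneous hτhom hρhom hu
  obtain ⟨n, hn⟩ := isNilpotent_of_mem_graded 𝒜 (sub_ne_zero.mpr (Ne.symm hne))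
    (SetLike.coe_mem (DirectSum.decompose 𝒜 u (d' - d)))
  exact ((isLeftRegular_of_apply_mul_eq hρnd hv).pow n).ne_zero hn
end

section
/- Let A be a finite dimensional graded symmetric cellular algebra with homogeneous symmetrizing trace τ of degree d ≠ 0. Then the Higman ideal H(A) is contained in the homogeneous component A_{-d}, and dim_K H(A) ≤ dim_K A_0. -/
/-!
Let `x_p` be the cellular basis and `y_p` its `τ`-dual basis, so that `H(A)` is the image of
`I a = ∑ x_p a y_p`. As `τ` is homogeneous of degree `-d`, the dual basis is homogeneous with
`deg y_p = -d - deg x_p`. For every `c`, `τ (c * I a)` is the trace of `v ↦ c v a`; a homogeneous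
`a` of nonzero degree is nilpotent (its powers lie in distinct graded pieces of a finite
dimensional algebra), so that trace vanishes and `I a = 0` by nondegeneracy. Hence `I` factors
through the projection onto `A_0`, which gives `H(A) = I(A_0) ⊆ A_{-d}` and
`dim H(A) ≤ dim A_0`.
-/

open Module LinearMap

theorem LinearMap.apply_eq_apply_decompose {R M N ι : Type*} [CommRing R]
    [AddCommGroup M] [Module R M] [AddCommGroup N] [Module R N] [DecidableEq ι]
    (ℳ : ι → Submodule R M) [DirectSum.Decomposition ℳ] (f : M →ₗ[R] N) {j : ι}
    (hf : ∀ i ≠ j, ∀ m ∈ ℳ i, f m = 0) (m : M) : f m = f (DirectSum.decompose ℳ m j) := by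
  classical
  conv_lhs => rw [← DirectSum.sum_support_decompose ℳ m]
  rw [map_sum]
  refine Finset.sum_eq_single j (fun i _ hi => hf i hi _ (SetLike.coe_mem _)) fun h => ?_
  rw [DFinsupp.notMem_support_iff.mp h, ZeroMemClass.coe_zero, map_zero]

variable {K A : Type*} [Field K] [Ring A] [Algebra K A]

section Graded

variable (𝒜 : ℤ → Submodule K A) [GradedAlgebra 𝒜]

theorem isNilpotent_of_mem_graded_s4 [FiniteDimensional K A] {j : ℤ} (hj : j ≠ 0) {a : A}
    (ha : a ∈ 𝒜 j) : IsNilpotent a := by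
  by_contra h
  have hinj : Function.Injective fun n : ℕ => n • j := fun m n hmn => by
    simpa [hj] using hmn
  exact Module.Finite.not_linearIndependent_of_infinite _ <|
    ((DirectSum.Decomposition.isInternal 𝒜).submodule_iSupIndep.comp hinj).linearIndependent
      _ (fun n => SetLike.pow_mem_graded n ha) fun n hn => h ⟨n, hn⟩

variable {τ : A →ₗ[K] K} {d : ℤ}

theorem map_mul_eq_map_mul_decompose (hτ : ∀ i ≠ -d, ∀ a ∈ 𝒜 i, τ a = 0) {i : ℤ}
    {u : A} (hu : u ∈ 𝒜 i) (v : A) : τ (u * v) = τ (u * DirectSum.decompose 𝒜 v (-d - i)) := by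
  have h := DirectSum.coe_decompose_mul_add_of_left_mem 𝒜 (b := v) (j := -d - i) hu
  rw [add_sub_cancel] at h
  rw [τ.apply_eq_apply_decompose 𝒜 hτ, h]

theorem dual_mem_graded {ι : Type*} [DecidableEq ι] (hτ : ∀ i ≠ -d, ∀ a ∈ 𝒜 i, τ a = 0)
    (hnd : ∀ w : A, (∀ c, τ (c * w) = 0) → w = 0) (b : Basis ι K A) {y : ι → A}
    (hy : ∀ p q, τ (b p * y q) = if p = q then 1 else 0) {e : ι → ℤ}
    (hb : ∀ p, b p ∈ 𝒜 (e p)) (p : ι) : y p ∈ 𝒜 (-d - e p) := by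
  have hy' := (DirectSum.decompose 𝒜 (y p) (-d - e p)).2
  suffices y p - DirectSum.decompose 𝒜 (y p) (-d - e p) = 0 from sub_eq_zero.1 this ▸ hy'
  refine hnd _ fun c => ?_
  suffices τ ∘ₗ mulRight K (y p - DirectSum.decompose 𝒜 (y p) (-d - e p)) = 0 from
    LinearMap.congr_fun this c
  refine b.ext fun q => ?_
  rw [comp_apply, mulRight_apply, LinearMap.zero_apply, mul_sub, map_sub, sub_eq_zero]
  by_cases hq : e q = e p
  · rw [map_mul_eq_map_mul_decompose 𝒜 hτ (hb q), hq]
  · rw [hy, if_neg (ne_of_apply_ne e hq),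
      hτ _ (by omega) _ (SetLike.mul_mem_graded (hb q) hy')]

end Graded

variable {ι : Type*} [Fintype ι]

namespace Module.Basis

variable [DecidableEq ι] {τ : A →ₗ[K] K} (b : Basis ι K A) {y : ι → A}

theorem repr_eq_map_mul_dual (hy : ∀ p q, τ (b p * y q) = if p = q then 1 else 0)
    (w : A) (q : ι) : b.repr w q = τ (w * y q) := by
  conv_rhs => rw [← b.sum_repr w]
  simp only [Finset.sum_mul, smul_mul_assoc, map_sum, map_smul, hy, smul_eq_mul, mul_ite,
    mul_one, mul_zero, Finset.sum_ite_eq', Finset.mem_univ, if_true]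

theorem trace_eq_sum_map_mul_dual (hy : ∀ p q, τ (b p * y q) = if p = q then 1 else 0)
    (φ : A →ₗ[K] A) : trace K A φ = ∑ p, τ (φ (b p) * y p) := by
  rw [trace_eq_matrix_trace K b, Matrix.trace]
  simp only [Matrix.diag_apply, LinearMap.toMatrix_apply, b.repr_eq_map_mul_dual hy]

end Module.Basis

variable (K) in
def higmanMap (x y : ι → A) : A →ₗ[K] A :=
  ∑ p, mulRight K (y p) ∘ₗ mulLeft K (x p)

theorem higmanMap_apply (x y : ι → A) (a : A) :
    higmanMap K x y a = ∑ p, x p * a * y p := by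
  simp [higmanMap]

section Nilpotent

variable [DecidableEq ι] {τ : A →ₗ[K] K} (b : Basis ι K A) {y : ι → A}

theorem map_mul_higmanMap_eq_trace (hy : ∀ p q, τ (b p * y q) = if p = q then 1 else 0)
    (a c : A) :
    τ (c * higmanMap K b y a) = trace K A (mulLeft K c * mulRight K a) := by
  simp [b.trace_eq_sum_map_mul_dual hy, higmanMap_apply, Finset.mul_sum, mul_assoc]

theorem higmanMap_eq_zero_of_isNilpotent (hy : ∀ p q, τ (b p * y q) = if p = q then 1 else 0)
    (hτ : ∀ w : A, (∀ c, τ (c * w) = 0) → w = 0) {a : A} (ha : IsNilpotent a) :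
    higmanMap K b y a = 0 := by
  have := Module.Finite.of_basis b
  refine hτ _ fun c => ?_
  have hnil : IsNilpotent (mulLeft K c * mulRight K a) :=
    (commute_mulLeft_right c a).isNilpotent_mul_left ((isNilpotent_mulRight_iff K a).2 ha)
  rw [map_mul_higmanMap_eq_trace b hy]
  exact (isNilpotent_trace_of_isNilpotent hnil).eq_zero

end Nilpotent

section Graded

variable [DecidableEq ι] (𝒜 : ℤ → Submodule K A) [GradedAlgebra 𝒜] {τ : A →ₗ[K] K} {d : ℤ}
  {b : Basis ι K A} {y : ι → A}

theorem higmanMap_decompose_zero (hy : ∀ p q, τ (b p * y q) = if p = q then 1 else 0)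
    (hnd : ∀ w : A, (∀ c, τ (c * w) = 0) → w = 0) (a : A) :
    higmanMap K b y (DirectSum.decompose 𝒜 a 0) = higmanMap K b y a := by
  have := Module.Finite.of_basis b
  refine ((higmanMap K b y).apply_eq_apply_decompose 𝒜 (fun i hi x hx => ?_) a).symm
  exact higmanMap_eq_zero_of_isNilpotent b hy hnd (isNilpotent_of_mem_graded_s4 𝒜 hi hx)

theorem higmanMap_mem_graded (hτ : ∀ i ≠ -d, ∀ a ∈ 𝒜 i, τ a = 0)
    (hnd : ∀ w : A, (∀ c, τ (c * w) = 0) → w = 0)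
    (hy : ∀ p q, τ (b p * y q) = if p = q then 1 else 0) {e : ι → ℤ}
    (hb : ∀ p, b p ∈ 𝒜 (e p)) (a : A) : higmanMap K b y a ∈ 𝒜 (-d) := by
  rw [← higmanMap_decompose_zero 𝒜 hy hnd, higmanMap_apply]
  refine Submodule.sum_mem _ fun p _ => ?_
  have := SetLike.mul_mem_graded (SetLike.mul_mem_graded (hb p) (DirectSum.decompose 𝒜 a 0).2)
    (dual_mem_graded 𝒜 hτ hnd b hy hb p)
  rwa [add_zero, add_sub_cancel] at this

theorem finrank_range_higmanMap_le (hy : ∀ p q, τ (b p * y q) = if p = q then 1 else 0)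
    (hnd : ∀ w : A, (∀ c, τ (c * w) = 0) → w = 0) :
    finrank K (range (higmanMap K b y)) ≤ finrank K (𝒜 0) := by
  have := Module.Finite.of_basis b
  have hle : range (higmanMap K b y) ≤ range (higmanMap K b y ∘ₗ (𝒜 0).subtype) := by
    rintro _ ⟨a, rfl⟩
    exact ⟨_, higmanMap_decompose_zero 𝒜 hy hnd a⟩
  exact (Submodule.finrank_mono hle).trans (finrank_range_le _)

end Graded

open scoped Classical

/-- Theorem 3.4(3): the Higman ideal is contained in `A_{-d}`, and
`dim H(A) ≤ dim A₀` when `d ≠ 0`. -/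
theorem stmt4
    {K A : Type} [Field K] [Ring A] [Algebra K A] [FiniteDimensional K A]
    {Λ : Type} [PartialOrder Λ] [Fintype Λ]
    {M : Λ → Type} [∀ l : Λ, Fintype (M l)]
    (C : ∀ l : Λ, M l → M l → A)
    (bas : Module.Basis (Σ l : Λ, M l × M l) K A)
    (hbas : ∀ (l : Λ) (S T : M l), bas ⟨l, (S, T)⟩ = C l S T)
    (star : A →ₗ[K] A)
    (hstar : ∀ a b : A, star (a * b) = star b * star a)
    (hstarC : ∀ (l : Λ) (S T : M l), star (C l S T) = C l T S)
    (hcell : ∀ (a : A) (l : Λ), ∃ r : M l → M l → K, ∀ S T : M l,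
      a * C l S T - ∑ S' : M l, r S' S • C l S' T ∈
        Submodule.span K {x : A | ∃ μ : Λ, μ < l ∧ ∃ U V : M μ, x = C μ U V})
    (τ : A →ₗ[K] K)
    (hτsym : ∀ a b : A, τ (a * b) = τ (b * a))
    (hτnd : ∀ a : A, a ≠ 0 → ∃ b : A, τ (a * b) ≠ 0)
    (D : ∀ l : Λ, M l → M l → A)
    (hdual : ∀ (l μ : Λ) (S T : M l) (U V : M μ),
      τ (C l S T * D μ U V) =
        if (⟨l, (S, T)⟩ : Σ l : Λ, M l × M l) = ⟨μ, (V, U)⟩ then 1 else 0)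
    (𝒜 : ℤ → Submodule K A) [GradedAlgebra 𝒜]
    (deg : ∀ l : Λ, M l → ℤ)
    (hhom : ∀ (l : Λ) (S T : M l), C l S T ∈ 𝒜 (deg l S + deg l T))
    (d : ℤ)
    (hτhom : ∀ i : ℤ, i ≠ -d → ∀ a ∈ 𝒜 i, τ a = 0)
    (hd : d ≠ 0) :
    (∀ a : A,
      (∑ p : Σ l : Λ, M l × M l, C p.1 p.2.1 p.2.2 * a * D p.1 p.2.2 p.2.1) ∈ 𝒜 (-d)) ∧
    Module.finrank K
        (Submodule.span K
          {z : A | ∃ a : A,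
            z = ∑ p : Σ l : Λ, M l × M l, C p.1 p.2.1 p.2.2 * a * D p.1 p.2.2 p.2.1}) ≤
      Module.finrank K (𝒜 0) := by
  set D' : (Σ l : Λ, M l × M l) → A := fun q => D q.1 q.2.2 q.2.1
  have hpair : ∀ p q, τ (bas p * D' q) = if p = q then 1 else 0 := by
    rintro ⟨l, S, T⟩ ⟨μ, U, V⟩
    rw [hbas]
    exact hdual l μ S T V U
  have hnd : ∀ w : A, (∀ c, τ (c * w) = 0) → w = 0 := fun w hw => by
    by_contra hw0
    obtain ⟨c, hc⟩ := hτnd w hw0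
    exact hc (hτsym w c ▸ hw c)
  have hhigman : ∀ a, ∑ p : Σ l : Λ, M l × M l, C p.1 p.2.1 p.2.2 * a * D p.1 p.2.2 p.2.1 =
      higmanMap K bas D' a := fun a => by
    simp [higmanMap_apply, hbas, D']
  have hrange : {z : A | ∃ a, z = ∑ p : Σ l : Λ, M l × M l,
      C p.1 p.2.1 p.2.2 * a * D p.1 p.2.2 p.2.1} = range (higmanMap K bas D') := by
    ext z
    exact exists_congr fun a => by rw [hhigman, eq_comm]
  rw [hrange, Submodule.span_eq]
  have hbas_mem : ∀ p, bas p ∈ 𝒜 (deg p.1 p.2.1 + deg p.1 p.2.2) := fun p =>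
    hbas _ _ _ ▸ hhom _ _ _
  exact ⟨fun a => hhigman a ▸ higmanMap_mem_graded 𝒜 hτhom hnd hpair hbas_mem a,
    finrank_range_higmanMap_le 𝒜 hpair hnd⟩
end

section
/- Let A be a finite dimensional symmetric algebra with symmetrizing trace τ, basis {x_i} and dual basis {y_i}. For any integer c (with respect to a grading on A making τ homogeneous and the basis homogeneous), the set H_c(A) = { Σ_{deg(x_i)=c} x_i a y_i : a ∈ A } is contained in the centralizer Z_A(A_0) of the degree-zero component A_0 in A. Consequently the K-span H_gr(A) of all H_c(A) satisfies H_gr(A) ⊆ Z_A(A_0). -/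
/-!
For dual bases `x`, `y` of a symmetric trace `τ`, both `(∑ xᵢ a yᵢ) b` and `b (∑ xⱼ a yⱼ)` expand as
`∑ τ(b xⱼ yᵢ) xᵢ a yⱼ`, the first summed over `i` in the chosen index set and the second over `j`;
the coefficients `τ(b xⱼ yᵢ)` form the matrix of left multiplication by `b` in the basis `x`.
If `b` has degree `0` and `x` is homogeneous, this matrix only links basis vectors of equal degree,
so the two restricted sums agree.
-/

open scoped Classical

namespace Module.Basis

section Graded

variable {ι R M : Type*} {κ : Type*} [DecidableEq ι] [Semiring R] [AddCommMonoid M] [Module R M]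
  (ℳ : ι → Submodule R M) [DirectSum.Decomposition ℳ]

theorem repr_eq_zero_of_mem_of_ne (x : Basis κ R M) {deg : κ → ι} (hx : ∀ k, x k ∈ ℳ (deg k))
    {m : ι} {b : M} (hb : b ∈ ℳ m) {i : κ} (hi : deg i ≠ m) : x.repr b i = 0 := by
  let proj : M →ₗ[R] M := (ℳ (deg i)).subtype ∘ₗ DirectSum.component R ι _ (deg i) ∘ₗ
    (DirectSum.decomposeLinearEquiv ℳ).toLinearMap
  have hproj (z : M) : proj z = DirectSum.decompose ℳ z (deg i) := rfl
  have hcoord : x.coord i ∘ₗ proj = x.coord i := by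
    refine x.ext fun k => ?_
    simp only [LinearMap.comp_apply, hproj, coord_apply]
    by_cases hk : deg k = deg i
    · rw [← hk, DirectSum.decompose_of_mem_same ℳ (hx k)]
    · have hki : k ≠ i := fun h => hk (h ▸ rfl)
      simp [DirectSum.decompose_of_mem_ne ℳ (hx k) hk, hki]
  have := LinearMap.congr_fun hcoord b
  rwa [LinearMap.comp_apply, hproj, DirectSum.decompose_of_mem_ne ℳ hb (Ne.symm hi), map_zero,
    coord_apply, eq_comm] at this

end Graded

section Dual

variable {ι R A : Type*} [CommSemiring R] [Semiring A] [Algebra R A] {τ : A →ₗ[R] R}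
  {x y : Basis ι R A}

theorem repr_apply_eq_apply_mul_dual (hdual : ∀ i j, τ (x i * y j) = if i = j then 1 else 0)
    (z : A) (j : ι) : x.repr z j = τ (z * y j) := by
  have : x.coord j = τ ∘ₗ LinearMap.mulRight R (y j) :=
    x.ext fun k => by simp [hdual, Finsupp.single_apply]
  exact LinearMap.congr_fun this z

theorem repr_dual_apply_eq_apply_mul (hdual : ∀ i j, τ (x i * y j) = if i = j then 1 else 0)
    (z : A) (j : ι) : y.repr z j = τ (x j * z) := by
  have : y.coord j = τ ∘ₗ LinearMap.mulLeft R (x j) :=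
    y.ext fun k => by simp [hdual, Finsupp.single_apply, eq_comm]
  exact LinearMap.congr_fun this z

variable [Fintype ι]

theorem sum_mul_dual_mul (hτ : ∀ a b, τ (a * b) = τ (b * a))
    (hdual : ∀ i j, τ (x i * y j) = if i = j then 1 else 0) (s : Finset ι) (a b : A) :
    (∑ i ∈ s, x i * a * y i) * b = ∑ i ∈ s, ∑ j, x.repr (b * x j) i • (x i * a * y j) := by
  rw [Finset.sum_mul]
  refine Finset.sum_congr rfl fun i _ => ?_
  conv_lhs => rw [mul_assoc, ← y.sum_repr (y i * b), Finset.mul_sum]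
  refine Finset.sum_congr rfl fun j _ => ?_
  rw [mul_smul_comm, repr_dual_apply_eq_apply_mul hdual, repr_apply_eq_apply_mul_dual hdual,
    ← mul_assoc, hτ, ← mul_assoc]

theorem mul_sum_mul_dual (s : Finset ι) (a b : A) :
    b * (∑ j ∈ s, x j * a * y j) = ∑ j ∈ s, ∑ i, x.repr (b * x j) i • (x i * a * y j) := by
  rw [Finset.mul_sum]
  refine Finset.sum_congr rfl fun j _ => ?_
  conv_lhs => rw [← mul_assoc, ← mul_assoc, ← x.sum_repr (b * x j), Finset.sum_mul, Finset.sum_mul]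
  simp only [smul_mul_assoc]

theorem commute_sum_mul_dual (hτ : ∀ a b, τ (a * b) = τ (b * a))
    (hdual : ∀ i j, τ (x i * y j) = if i = j then 1 else 0) {s : Finset ι} {b : A}
    (hb : ∀ i j, x.repr (b * x j) i ≠ 0 → (i ∈ s ↔ j ∈ s)) (a : A) :
    Commute (∑ i ∈ s, x i * a * y i) b := by
  have hcut (i j : ι) (hij : ¬(i ∈ s ↔ j ∈ s)) : x.repr (b * x j) i • (x i * a * y j) = 0 := by
    rw [not_not.1 (mt (hb i j) hij), zero_smul]
  calc (∑ i ∈ s, x i * a * y i) * b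
      = ∑ i ∈ s, ∑ j ∈ s, x.repr (b * x j) i • (x i * a * y j) := by
        rw [sum_mul_dual_mul hτ hdual]
        refine Finset.sum_congr rfl fun i hi => (Finset.sum_subset s.subset_univ fun j _ hj => ?_).symm
        exact hcut i j (by tauto)
    _ = b * ∑ j ∈ s, x j * a * y j := by
        rw [mul_sum_mul_dual, Finset.sum_comm]
        refine Finset.sum_congr rfl fun j hj => Finset.sum_subset s.subset_univ fun i _ hi => ?_
        exact hcut i j (by tauto)

end Dual

end Module.Basis

theorem stmt5_general {K A : Type} [Field K] [Ring A] [Algebra K A]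
    (𝒜 : ℤ → Submodule K A) [GradedAlgebra 𝒜]
    (τ : A →ₗ[K] K)
    (hτsym : ∀ a b : A, τ (a * b) = τ (b * a))
    {ι : Type} [Fintype ι] (x y : Module.Basis ι K A)
    (degx : ι → ℤ) (hx : ∀ i : ι, x i ∈ 𝒜 (degx i))
    (hdual : ∀ i j : ι, τ (x i * y j) = if i = j then 1 else 0) :
    (∀ (c : ℤ) (a : A), ∀ b ∈ 𝒜 0,
      (∑ i ∈ Finset.univ.filter (fun i : ι => degx i = c), x i * a * y i) * b =
        b * ∑ i ∈ Finset.univ.filter (fun i : ι => degx i = c), x i * a * y i) ∧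
    (∀ z ∈ Submodule.span K
        {z : A | ∃ (c : ℤ) (a : A),
          z = ∑ i ∈ Finset.univ.filter (fun i : ι => degx i = c), x i * a * y i},
      ∀ b ∈ 𝒜 0, z * b = b * z) := by
  have hH (c : ℤ) (a : A) : ∑ i ∈ Finset.univ.filter (fun i : ι => degx i = c), x i * a * y i ∈
      Subalgebra.centralizer K (𝒜 0 : Set A) := by
    refine (Subalgebra.mem_centralizer_iff K).2 fun b hb =>
      (x.commute_sum_mul_dual hτsym hdual (fun i j hij => ?_) a).eq.symm
    have hbx : b * x j ∈ 𝒜 (degx j) := by simpa using SetLike.mul_mem_graded hb (hx j)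
    have hdeg : degx i = degx j := not_not.1 (mt (x.repr_eq_zero_of_mem_of_ne 𝒜 hx hbx) hij)
    simp [hdeg]
  have hspan : Submodule.span K {z : A | ∃ (c : ℤ) (a : A),
      z = ∑ i ∈ Finset.univ.filter (fun i : ι => degx i = c), x i * a * y i} ≤
      Subalgebra.toSubmodule (Subalgebra.centralizer K (𝒜 0 : Set A)) :=
    Submodule.span_le.2 fun _ ⟨c, a, hz⟩ => hz ▸ hH c a
  exact ⟨fun c a b hb => ((Subalgebra.mem_centralizer_iff K).1 (hH c a) b hb).symm,
    fun z hz b hb => ((Subalgebra.mem_centralizer_iff K).1 (hspan hz) b hb).symm⟩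

/-- Proposition 4.1: for each `c ∈ ℤ`, `H_c(A) = {∑_{deg xᵢ = c} xᵢ a yᵢ : a ∈ A}` is
contained in the centralizer of `A₀`; consequently the span `H_gr(A)` of all the
`H_c(A)` is contained in the centralizer of `A₀`. -/
theorem stmt5 {K A : Type} [Field K] [Ring A] [Algebra K A] [FiniteDimensional K A]
    (𝒜 : ℤ → Submodule K A) [GradedAlgebra 𝒜]
    (τ : A →ₗ[K] K)
    (hτsym : ∀ a b : A, τ (a * b) = τ (b * a))
    (hτnd : ∀ a : A, a ≠ 0 → ∃ b : A, τ (a * b) ≠ 0)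
    (d : ℤ)
    (hτhom : ∀ i : ℤ, i ≠ -d → ∀ a ∈ 𝒜 i, τ a = 0)
    {ι : Type} [Fintype ι] (x y : Module.Basis ι K A)
    (degx : ι → ℤ) (hx : ∀ i : ι, x i ∈ 𝒜 (degx i))
    (hdual : ∀ i j : ι, τ (x i * y j) = if i = j then 1 else 0) :
    (∀ (c : ℤ) (a : A), ∀ b ∈ 𝒜 0,
      (∑ i ∈ Finset.univ.filter (fun i : ι => degx i = c), x i * a * y i) * b =
        b * ∑ i ∈ Finset.univ.filter (fun i : ι => degx i = c), x i * a * y i) ∧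
    (∀ z ∈ Submodule.span K
        {z : A | ∃ (c : ℤ) (a : A),
          z = ∑ i ∈ Finset.univ.filter (fun i : ι => degx i = c), x i * a * y i},
      ∀ b ∈ 𝒜 0, z * b = b * z) :=
  stmt5_general 𝒜 τ hτsym x y degx hx hdual
end

section
/- Let A be a symmetric cellular algebra with cellular basis {C^λ_{S,T}} and dual basis {D^λ_{S,T}} determined by a symmetrizing trace τ. Then for all λ ∈ Λ and S, T, P, Q ∈ M(λ): (i) C^λ_{S,T} D^λ_{T,Q} = C^λ_{S,P} D^λ_{P,Q}; (ii) C^λ_{S,T} D^λ_{P,Q} = 0 whenever T ≠ P; (iii) D^λ_{P,Q} C^λ_{S,T} = 0 whenever Q ≠ S. -/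
open scoped Classical

/-!
As `τ` is symmetric and nondegenerate, `x = 0` as soon as `τ (a * x) = 0` for every `a`. By
duality, `τ (y * D l P Q)` reads off the coefficient of `C l Q P` in `y`, so it ignores the span of
the cells below `l`. Modulo that span, `a * C l S T` is given by the cellular structure constants
`r` of `a`, and, applying the anti-involution `star`, `C l S T * a` by those of `star a`. Hence
`τ (a * (C l S T * D l P Q)) = if T = P then r Q S else 0`, which is independent of `T` when
`T = P`, and `τ (a * (D l P Q * C l S T)) = τ (C l S T * a * D l P Q)` vanishes unless `Q = S`.
-/

section SymmetricCellular

variable {K A : Type*} [CommRing K] [Ring A] [Algebra K A]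
  {Λ : Type*} [PartialOrder Λ] {M : Λ → Type*}

theorem eq_zero_of_forall_trace_mul_eq_zero {τ : A →ₗ[K] K}
    (hτsym : ∀ a b : A, τ (a * b) = τ (b * a))
    (hτnd : ∀ a : A, a ≠ 0 → ∃ b : A, τ (a * b) ≠ 0)
    {x : A} (hx : ∀ a : A, τ (a * x) = 0) : x = 0 := by
  by_contra hx0
  obtain ⟨b, hb⟩ := hτnd x hx0
  exact hb (hτsym x b ▸ hx b)

variable (K) in
def lowerCellSpan (C : ∀ l : Λ, M l → M l → A) (l : Λ) : Submodule K A :=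
  Submodule.span K {x : A | ∃ μ : Λ, μ < l ∧ ∃ U V : M μ, x = C μ U V}

variable {C : ∀ l : Λ, M l → M l → A}

theorem map_lowerCellSpan_le {star : A →ₗ[K] A}
    (hstarC : ∀ (l : Λ) (S T : M l), star (C l S T) = C l T S) (l : Λ) :
    (lowerCellSpan K C l).map star ≤ lowerCellSpan K C l := by
  rw [lowerCellSpan, Submodule.map_span]
  apply Submodule.span_mono
  rintro _ ⟨_, ⟨μ, hμ, U, V, rfl⟩, rfl⟩
  exact ⟨μ, hμ, V, U, hstarC μ U V⟩

theorem cell_mul_sub_mem_lowerCellSpan [∀ l : Λ, Fintype (M l)] {star : A →ₗ[K] A}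
    (hstar : ∀ a b : A, star (a * b) = star b * star a)
    (hstarC : ∀ (l : Λ) (S T : M l), star (C l S T) = C l T S)
    (hinv : ∀ a : A, star (star a) = a) {a : A} {l : Λ} {r : M l → M l → K}
    (hr : ∀ S T : M l, star a * C l S T - ∑ S' : M l, r S' S • C l S' T ∈ lowerCellSpan K C l)
    (S T : M l) :
    C l S T * a - ∑ T' : M l, r T' T • C l S T' ∈ lowerCellSpan K C l := by
  have h := map_lowerCellSpan_le hstarC l (Submodule.mem_map_of_mem (f := star) (hr T S))
  simpa only [map_sub, map_sum, map_smul, hstar, hstarC, hinv] using h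

variable {τ : A →ₗ[K] K} {D : ∀ l : Λ, M l → M l → A}
  (hdual : ∀ (l μ : Λ) (S T : M l) (U V : M μ),
    τ (C l S T * D μ U V) =
      if (⟨l, (S, T)⟩ : Σ l : Λ, M l × M l) = ⟨μ, (V, U)⟩ then 1 else 0)
include hdual

theorem trace_mul_dual_eq_zero_of_mem_lowerCellSpan {l : Λ} (P Q : M l) {w : A}
    (hw : w ∈ lowerCellSpan K C l) : τ (w * D l P Q) = 0 := by
  have hle : lowerCellSpan K C l ≤ LinearMap.ker (τ ∘ₗ LinearMap.mulRight K (D l P Q)) := by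
    refine Submodule.span_le.mpr ?_
    rintro _ ⟨μ, hμ, U, V, rfl⟩
    simp [hdual, hμ.ne]
  exact hle hw

theorem trace_mul_dual_eq_of_sub_mem_lowerCellSpan {l : Λ} (P Q : M l) {x y : A}
    (h : x - y ∈ lowerCellSpan K C l) : τ (x * D l P Q) = τ (y * D l P Q) := by
  rw [← sub_eq_zero, ← map_sub, ← sub_mul]
  exact trace_mul_dual_eq_zero_of_mem_lowerCellSpan hdual P Q h

theorem trace_mul_cell_mul_dual [∀ l : Λ, Fintype (M l)] {a : A} {l : Λ} {r : M l → M l → K}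
    (hr : ∀ S T : M l, a * C l S T - ∑ S' : M l, r S' S • C l S' T ∈ lowerCellSpan K C l)
    (S T P Q : M l) :
    τ (a * (C l S T * D l P Q)) = if T = P then r Q S else 0 := by
  rw [← mul_assoc, trace_mul_dual_eq_of_sub_mem_lowerCellSpan hdual P Q (hr S T),
    Finset.sum_mul, map_sum]
  simp [hdual, and_comm, ite_and, eq_comm (a := T)]

theorem trace_mul_dual_mul_cell [∀ l : Λ, Fintype (M l)] {star : A →ₗ[K] A}
    (hstar : ∀ a b : A, star (a * b) = star b * star a)
    (hstarC : ∀ (l : Λ) (S T : M l), star (C l S T) = C l T S)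
    (hinv : ∀ a : A, star (star a) = a) (hτsym : ∀ a b : A, τ (a * b) = τ (b * a))
    {a : A} {l : Λ} {r : M l → M l → K}
    (hr : ∀ S T : M l, star a * C l S T - ∑ S' : M l, r S' S • C l S' T ∈ lowerCellSpan K C l)
    (S T P Q : M l) :
    τ (a * (D l P Q * C l S T)) = if Q = S then r P T else 0 := by
  rw [← mul_assoc, hτsym, ← mul_assoc, trace_mul_dual_eq_of_sub_mem_lowerCellSpan hdual P Q
    (cell_mul_sub_mem_lowerCellSpan hstar hstarC hinv hr S T), Finset.sum_mul, map_sum]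
  simp [hdual, ite_and, eq_comm (a := S)]

end SymmetricCellular

/-- Lemma 2.4 (3),(5),(6) for symmetric cellular algebras. -/
theorem stmt6
    {K A : Type} [Field K] [Ring A] [Algebra K A] [FiniteDimensional K A]
    {Λ : Type} [PartialOrder Λ] [Fintype Λ]
    {M : Λ → Type} [∀ l : Λ, Fintype (M l)]
    (C : ∀ l : Λ, M l → M l → A)
    (bas : Module.Basis (Σ l : Λ, M l × M l) K A)
    (hbas : ∀ (l : Λ) (S T : M l), bas ⟨l, (S, T)⟩ = C l S T)
    (star : A →ₗ[K] A)
    (hstar : ∀ a b : A, star (a * b) = star b * star a)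
    (hstarC : ∀ (l : Λ) (S T : M l), star (C l S T) = C l T S)
    (hcell : ∀ (a : A) (l : Λ), ∃ r : M l → M l → K, ∀ S T : M l,
      a * C l S T - ∑ S' : M l, r S' S • C l S' T ∈
        Submodule.span K {x : A | ∃ μ : Λ, μ < l ∧ ∃ U V : M μ, x = C μ U V})
    (τ : A →ₗ[K] K)
    (hτsym : ∀ a b : A, τ (a * b) = τ (b * a))
    (hτnd : ∀ a : A, a ≠ 0 → ∃ b : A, τ (a * b) ≠ 0)
    (D : ∀ l : Λ, M l → M l → A)
    (hdual : ∀ (l μ : Λ) (S T : M l) (U V : M μ),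
      τ (C l S T * D μ U V) =
        if (⟨l, (S, T)⟩ : Σ l : Λ, M l × M l) = ⟨μ, (V, U)⟩ then 1 else 0)
    :
    (∀ (l : Λ) (S T P Q : M l), C l S T * D l T Q = C l S P * D l P Q) ∧
    (∀ (l : Λ) (S T P Q : M l), T ≠ P → C l S T * D l P Q = 0) ∧
    (∀ (l : Λ) (S T P Q : M l), Q ≠ S → D l P Q * C l S T = 0) := by
  have hinv : ∀ a : A, star (star a) = a := fun a =>
    LinearMap.congr_fun (bas.ext (f₁ := star ∘ₗ star) (f₂ := LinearMap.id)
      fun ⟨l, S, T⟩ => by simp [hbas, hstarC]) a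
  have hzero : ∀ x : A, (∀ a : A, τ (a * x) = 0) → x = 0 := fun _ =>
    eq_zero_of_forall_trace_mul_eq_zero hτsym hτnd
  refine ⟨fun l S T P Q => sub_eq_zero.mp (hzero _ fun a => ?_),
    fun l S T P Q hTP => hzero _ fun a => ?_, fun l S T P Q hQS => hzero _ fun a => ?_⟩
  · obtain ⟨r, hr⟩ := hcell a l
    rw [mul_sub, map_sub, trace_mul_cell_mul_dual hdual hr, trace_mul_cell_mul_dual hdual hr,
      if_pos rfl, if_pos rfl, sub_self]
  · obtain ⟨r, hr⟩ := hcell a l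
    rw [trace_mul_cell_mul_dual hdual hr, if_neg hTP]
  · obtain ⟨r, hr⟩ := hcell (star a) l
    rw [trace_mul_dual_mul_cell hdual hstar hstarC hinv hτsym hr, if_neg hQS]
end

section
/- Let A be a symmetric cellular algebra. Then (C^λ_{S,S} D^λ_{S,S})² = k_λ · C^λ_{S,S} D^λ_{S,S} for every λ ∈ Λ and S ∈ M(λ), where k_λ is the scalar satisfying G(λ)G'(λ) = k_λ E. -/
/-!
Write `C = C^λ_{S,S}` and `D = D^λ_{S,S}`. The dual basis is annihilated on the left by the cells
strictly below its own level: pairing `C^μ * D^λ` (`μ < λ`) against any basis element and using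
the symmetry of `τ` and the cellular multiplication rule, everything lands in cells of level
`≤ μ`, which are `τ`-orthogonal to `D^λ`; nondegeneracy of `τ` then kills it. So in
`(C D)² = C (D C) D` all terms of `A(<λ)` disappear: `D C ≡ ∑ S' Φ'(S',S) C^λ_{S',S}`, where the
coefficients are read off with `τ`, and `C C^λ_{S',S} D ≡ Φ(S,S') C D`. Hence
`(C D)² = (∑ S' Φ(S,S') Φ'(S',S)) C D`, and the sum is the `(S,S)` entry of `G(λ) G'(λ) = k_λ E`.
-/

open Finset
open scoped Classical

section CellSpan

variable (K : Type*) {A Λ : Type*} {M : Λ → Type*} [CommRing K] [Ring A] [Algebra K A]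

-- `cellSpan K C (· < λ)` is the paper's `A(<λ)`.
def cellSpan (X : ∀ l : Λ, M l → M l → A) (p : Λ → Prop) : Submodule K A :=
  Submodule.span K {x : A | ∃ μ : Λ, p μ ∧ ∃ U V : M μ, x = X μ U V}

variable {K} {X : ∀ l : Λ, M l → M l → A}

theorem mem_cellSpan {p : Λ → Prop} {μ : Λ} (hμ : p μ) (U V : M μ) :
    X μ U V ∈ cellSpan K X p :=
  Submodule.subset_span ⟨μ, hμ, U, V, rfl⟩

theorem cellSpan_mono {p q : Λ → Prop} (hpq : ∀ μ, p μ → q μ) :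
    cellSpan K X p ≤ cellSpan K X q :=
  Submodule.span_mono fun _ ⟨μ, hμ, U, V, hx⟩ => ⟨μ, hpq μ hμ, U, V, hx⟩

theorem map_eq_zero_of_mem_cellSpan {B : Type*} [AddCommGroup B] [Module K B] (f : A →ₗ[K] B)
    {p : Λ → Prop} (hf : ∀ μ, p μ → ∀ U V : M μ, f (X μ U V) = 0) {x : A}
    (hx : x ∈ cellSpan K X p) : f x = 0 := by
  suffices cellSpan K X p ≤ LinearMap.ker f from this hx
  exact Submodule.span_le.2 fun _ ⟨μ, hμ, U, V, hx⟩ => hx ▸ hf μ hμ U V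

theorem mem_cellSpan_le_of_sub_sum_mem [Preorder Λ] {μ : Λ} [Fintype (M μ)] {V : M μ}
    {r : M μ → K} {y : A} (hy : y - ∑ U, r U • X μ U V ∈ cellSpan K X (· < μ)) :
    y ∈ cellSpan K X (· ≤ μ) := by
  have hsum : ∑ U, r U • X μ U V ∈ cellSpan K X (· ≤ μ) :=
    sum_mem fun U _ => Submodule.smul_mem _ _ (mem_cellSpan (p := (· ≤ μ)) le_rfl U V)
  have hlow : y - ∑ U, r U • X μ U V ∈ cellSpan K X (· ≤ μ) :=
    cellSpan_mono (p := (· < μ)) (fun _ => le_of_lt) hy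
  simpa using add_mem hlow hsum

end CellSpan

theorem eq_zero_of_forall_trace_mul_basis_eq_zero {K A ι : Type*} [CommRing K] [Ring A]
    [Algebra K A] (b : Module.Basis ι K A) {τ : A →ₗ[K] K}
    (hτnd : ∀ a : A, a ≠ 0 → ∃ b : A, τ (a * b) ≠ 0) {c : A} (hc : ∀ i, τ (c * b i) = 0) :
    c = 0 := by
  by_contra hc0
  obtain ⟨a, ha⟩ := hτnd c hc0
  have hzero : τ ∘ₗ LinearMap.mulLeft K c = 0 := b.ext fun i => hc i
  exact ha (LinearMap.congr_fun hzero a)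

section DualCellBasis

variable {K A Λ : Type*} {M : Λ → Type*} [CommRing K] [Ring A] [Algebra K A]

def IsDualCellBasis (τ : A →ₗ[K] K) (C D : ∀ l : Λ, M l → M l → A) : Prop :=
  ∀ (l μ : Λ) (S T : M l) (U V : M μ),
    τ (C l S T * D μ U V) = if (⟨l, (S, T)⟩ : Σ l : Λ, M l × M l) = ⟨μ, (V, U)⟩ then 1 else 0

variable {τ : A →ₗ[K] K} {C D : ∀ l : Λ, M l → M l → A}

namespace IsDualCellBasis

theorem tau_C_mul_D_of_ne (hdual : IsDualCellBasis τ C D) {l μ : Λ} (h : l ≠ μ)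
    (S T : M l) (U V : M μ) :
    τ (C l S T * D μ U V) = 0 := by
  rw [hdual, if_neg fun he => h (congrArg Sigma.fst he)]

theorem tau_C_mul_D_of_ne_left (hdual : IsDualCellBasis τ C D) {l : Λ} {S V : M l} (h : S ≠ V)
    (T U : M l) :
    τ (C l S T * D l U V) = 0 := by
  rw [hdual, if_neg]
  simpa using fun hSV _ => h hSV

theorem tau_C_mul_D_self (hdual : IsDualCellBasis τ C D) (l : Λ) (S T : M l) :
    τ (C l S T * D l T S) = 1 := by
  rw [hdual, if_pos rfl]

theorem tau_mul_D_eq_zero_of_mem_cellSpan (hdual : IsDualCellBasis τ C D) {p : Λ → Prop} {l : Λ}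
    (hl : ¬ p l) {x : A} (hx : x ∈ cellSpan K C p) (P Q : M l) : τ (x * D l P Q) = 0 :=
  map_eq_zero_of_mem_cellSpan (τ ∘ₗ LinearMap.mulRight K (D l P Q))
    (fun μ hμ U V => hdual.tau_C_mul_D_of_ne (by rintro rfl; exact hl hμ) U V P Q) hx

theorem tau_C_mul_eq_zero_of_mem_cellSpan (hdual : IsDualCellBasis τ C D) {p : Λ → Prop} {l : Λ}
    (hl : ¬ p l) {x : A} (hx : x ∈ cellSpan K D p) (S T : M l) : τ (C l S T * x) = 0 :=
  map_eq_zero_of_mem_cellSpan (τ ∘ₗ LinearMap.mulLeft K (C l S T))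
    (fun μ hμ U V => hdual.tau_C_mul_D_of_ne (by rintro rfl; exact hl hμ) S T U V) hx

theorem tau_mul_D_eq_coeff [Preorder Λ] [∀ l, Fintype (M l)] (hdual : IsDualCellBasis τ C D)
    {l : Λ} {T : M l} {r : M l → K} {y : A}
    (hy : y - ∑ S', r S' • C l S' T ∈ cellSpan K C (· < l)) (S : M l) :
    τ (y * D l T S) = r S := by
  have hlow := hdual.tau_mul_D_eq_zero_of_mem_cellSpan (p := (· < l)) (lt_irrefl l) hy T S
  rw [sub_mul, map_sub, sub_eq_zero] at hlow
  rw [hlow, sum_mul, map_sum, sum_eq_single S]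
  · rw [smul_mul_assoc, map_smul, hdual.tau_C_mul_D_self, smul_eq_mul, mul_one]
  · intro S' _ hS'
    rw [smul_mul_assoc, map_smul, hdual.tau_C_mul_D_of_ne_left hS', smul_zero]
  · simp

theorem tau_C_mul_D_mul_D [Preorder Λ] (hdual : IsDualCellBasis τ C D) {Φ' : ∀ l : Λ, M l → M l → K}
    (hΦ' : ∀ (l : Λ) (S T U V : M l),
      D l S T * D l U V - Φ' l T U • D l S V ∈ cellSpan K D (l < ·))
    (l : Λ) (S T U V : M l) : τ (C l V S * (D l S T * D l U V)) = Φ' l T U := by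
  have hhigh :=
    hdual.tau_C_mul_eq_zero_of_mem_cellSpan (p := (l < ·)) (lt_irrefl l) (hΦ' l S T U V) V S
  rw [mul_sub, map_sub, sub_eq_zero, mul_smul_comm, map_smul, hdual.tau_C_mul_D_self] at hhigh
  rw [hhigh, smul_eq_mul, mul_one]

theorem C_mul_D_eq_zero_of_lt [Preorder Λ] [∀ l, Fintype (M l)] (hdual : IsDualCellBasis τ C D)
    (bas : Module.Basis (Σ l : Λ, M l × M l) K A)
    (hbas : ∀ (l : Λ) (S T : M l), bas ⟨l, (S, T)⟩ = C l S T)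
    (hτsym : ∀ a b : A, τ (a * b) = τ (b * a))
    (hτnd : ∀ a : A, a ≠ 0 → ∃ b : A, τ (a * b) ≠ 0)
    (hcell : ∀ (a : A) (l : Λ), ∃ r : M l → M l → K, ∀ S T : M l,
      a * C l S T - ∑ S' : M l, r S' S • C l S' T ∈ cellSpan K C (· < l))
    {μ l : Λ} (hμl : μ < l) (U V : M μ) (P Q : M l) : C μ U V * D l P Q = 0 := by
  refine eq_zero_of_forall_trace_mul_basis_eq_zero bas hτnd fun ⟨ν, P', Q'⟩ => ?_
  obtain ⟨r, hr⟩ := hcell (C ν P' Q') μ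
  have hle := mem_cellSpan_le_of_sub_sum_mem (hr U V)
  rw [hbas, hτsym, ← mul_assoc]
  exact hdual.tau_mul_D_eq_zero_of_mem_cellSpan (p := (· ≤ μ)) (not_le_of_gt hμl) hle P Q

theorem mul_D_eq_of_sub_mem_cellSpan [Preorder Λ] [∀ l, Fintype (M l)]
    (hdual : IsDualCellBasis τ C D)
    (bas : Module.Basis (Σ l : Λ, M l × M l) K A)
    (hbas : ∀ (l : Λ) (S T : M l), bas ⟨l, (S, T)⟩ = C l S T)
    (hτsym : ∀ a b : A, τ (a * b) = τ (b * a))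
    (hτnd : ∀ a : A, a ≠ 0 → ∃ b : A, τ (a * b) ≠ 0)
    (hcell : ∀ (a : A) (l : Λ), ∃ r : M l → M l → K, ∀ S T : M l,
      a * C l S T - ∑ S' : M l, r S' S • C l S' T ∈ cellSpan K C (· < l))
    {l : Λ} {y z : A} (hyz : y - z ∈ cellSpan K C (· < l)) (P Q : M l) :
    y * D l P Q = z * D l P Q := by
  rw [← sub_eq_zero, ← sub_mul]
  exact map_eq_zero_of_mem_cellSpan (LinearMap.mulRight K (D l P Q))
    (fun μ hμ U V => hdual.C_mul_D_eq_zero_of_lt bas hbas hτsym hτnd hcell hμ U V P Q) hyz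

end IsDualCellBasis

end DualCellBasis

/-- Lemma 2.6: `(C^λ_{S,S} D^λ_{S,S})² = k_λ • C^λ_{S,S} D^λ_{S,S}`. -/
theorem stmt7
    {K A : Type} [Field K] [Ring A] [Algebra K A] [FiniteDimensional K A]
    {Λ : Type} [PartialOrder Λ] [Fintype Λ]
    {M : Λ → Type} [∀ l : Λ, Fintype (M l)]
    (C : ∀ l : Λ, M l → M l → A)
    (bas : Module.Basis (Σ l : Λ, M l × M l) K A)
    (hbas : ∀ (l : Λ) (S T : M l), bas ⟨l, (S, T)⟩ = C l S T)
    (star : A →ₗ[K] A)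
    (hstar : ∀ a b : A, star (a * b) = star b * star a)
    (hstarC : ∀ (l : Λ) (S T : M l), star (C l S T) = C l T S)
    (hcell : ∀ (a : A) (l : Λ), ∃ r : M l → M l → K, ∀ S T : M l,
      a * C l S T - ∑ S' : M l, r S' S • C l S' T ∈
        Submodule.span K {x : A | ∃ μ : Λ, μ < l ∧ ∃ U V : M μ, x = C μ U V})
    (τ : A →ₗ[K] K)
    (hτsym : ∀ a b : A, τ (a * b) = τ (b * a))
    (hτnd : ∀ a : A, a ≠ 0 → ∃ b : A, τ (a * b) ≠ 0)
    (D : ∀ l : Λ, M l → M l → A)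
    (hdual : ∀ (l μ : Λ) (S T : M l) (U V : M μ),
      τ (C l S T * D μ U V) =
        if (⟨l, (S, T)⟩ : Σ l : Λ, M l × M l) = ⟨μ, (V, U)⟩ then 1 else 0)
    (Φ Φ' : ∀ l : Λ, M l → M l → K)
    (hΦ : ∀ (l : Λ) (S T U V : M l),
      C l S T * C l U V - Φ l T U • C l S V ∈
        Submodule.span K {x : A | ∃ μ : Λ, μ < l ∧ ∃ U' V' : M μ, x = C μ U' V'})
    (hΦ' : ∀ (l : Λ) (S T U V : M l),
      D l S T * D l U V - Φ' l T U • D l S V ∈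
        Submodule.span K {x : A | ∃ μ : Λ, l < μ ∧ ∃ U' V' : M μ, x = D μ U' V'})
    (k : Λ → K)
    (hk : ∀ l : Λ, (Matrix.of (Φ l)) * (Matrix.of (Φ' l)) = k l • (1 : Matrix (M l) (M l) K))
    :
    ∀ (l : Λ) (S : M l),
      (C l S S * D l S S) ^ 2 = k l • (C l S S * D l S S) := by
  intro l S
  have hdual : IsDualCellBasis τ C D := hdual
  have hmulD : ∀ {y z : A}, y - z ∈ cellSpan K C (· < l) → y * D l S S = z * D l S S :=
    fun hyz => hdual.mul_D_eq_of_sub_mem_cellSpan bas hbas hτsym hτnd hcell hyz S S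
  obtain ⟨r, hr⟩ := hcell (D l S S) l
  have hr_eq : ∀ S', r S' S = Φ' l S' S := fun S' => by
    rw [← hdual.tau_mul_D_eq_coeff (hr S S) S', mul_assoc, hτsym, mul_assoc,
      hdual.tau_C_mul_D_mul_D hΦ']
  have hgram : ∑ S', Φ l S S' * Φ' l S' S = k l := by
    simpa [Matrix.mul_apply, Matrix.one_apply] using congrFun (congrFun (hk l) S) S
  calc (C l S S * D l S S) ^ 2 = C l S S * (D l S S * C l S S * D l S S) := by
        simp only [sq, mul_assoc]
    _ = ∑ S', r S' S • (C l S S * C l S' S * D l S S) := by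
        rw [hmulD (hr S S), sum_mul, mul_sum]
        simp only [smul_mul_assoc, mul_smul_comm, mul_assoc]
    _ = ∑ S', (Φ l S S' * Φ' l S' S) • (C l S S * D l S S) := by
        refine sum_congr rfl fun S' _ => ?_
        rw [hmulD (hΦ l S S S' S), smul_mul_assoc, smul_smul, hr_eq, mul_comm]
    _ = k l • (C l S S * D l S S) := by rw [← sum_smul, hgram]
end

section
/- Let A be a graded symmetric cellular algebra with homogeneous symmetrizing trace of degree d. For λ ∈ Λ and c ∈ ℤ set e_{λ,c} = Σ_{S∈M(λ), deg(S)=c} C^λ_{S,S} D^λ_{S,S}. Then e_{λ,c} · e_{μ,c'} = δ_{λμ} δ_{cc'} k_λ e_{λ,c} for all λ, μ ∈ Λ and c, c' ∈ ℤ. -/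
/-!
Write `X^λ_S = C^λ_{S,S} D^λ_{S,S}`. Expand `D^λ_{T,V} a` in the dual basis and multiply by
`C^λ_{S,T}`. Products `C^λ D^μ` vanish unless `μ ≤ λ`, and for `μ < λ` the coefficient
`τ(a C^μ D^λ_{T,V})` vanishes because `a C^μ` lies in the span of the cells `≤ μ`.
What is left is the sandwich formula
`C^λ_{S,T} D^λ_{T,V} a = ∑_P τ(a C^λ_{P,T} D^λ_{T,V}) C^λ_{S,T} D^λ_{T,P}`,
so `X^λ_S X^μ_U` is governed by the traces `τ(X^μ_U C^λ_{P,S} D^λ_{S,S})`.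
For `λ ≠ μ` these vanish, since the anti-involution makes the cell filtration two-sided.
For `λ = μ` the structure constants `Φ`, `Φ'` turn them into
`δ_{PU} δ_{US} ∑_Q Φ_{S,Q} Φ'_{Q,S} = δ_{PU} δ_{US} k_λ`,
hence `X_S X_U = δ_{SU} k_λ X_S`.
-/

open scoped Classical

namespace SymmetricCellular

variable {K A : Type} [Field K] [Ring A] [Algebra K A] {Λ : Type} {M : Λ → Type}

variable {C D : ∀ l : Λ, M l → M l → A} {τ : A →ₗ[K] K}
  (bas : Module.Basis (Σ l : Λ, M l × M l) K A)
  (hbas : ∀ (l : Λ) (S T : M l), bas ⟨l, (S, T)⟩ = C l S T)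
  (hτsym : ∀ a b : A, τ (a * b) = τ (b * a))
  (hτnd : ∀ a : A, a ≠ 0 → ∃ b : A, τ (a * b) ≠ 0)
  (hdual : ∀ (l μ : Λ) (S T : M l) (U V : M μ),
    τ (C l S T * D μ U V) =
      if (⟨l, (S, T)⟩ : Σ l : Λ, M l × M l) = ⟨μ, (V, U)⟩ then 1 else 0)

include hbas hτsym hτnd in
theorem eq_zero_of_forall_trace_C_mul_eq_zero {z : A}
    (hz : ∀ (l : Λ) (S T : M l), τ (C l S T * z) = 0) : z = 0 := by
  have hzero : τ ∘ₗ LinearMap.mulRight K z = 0 :=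
    bas.ext fun ⟨l, S, T⟩ => by simpa [hbas] using hz l S T
  by_contra hz0
  obtain ⟨b, hb⟩ := hτnd z hz0
  exact hb (by simpa [hτsym] using LinearMap.congr_fun hzero b)

include hdual in
theorem trace_C_mul_D_self (l : Λ) (S T U V : M l) :
    τ (C l S T * D l U V) = if S = V ∧ T = U then 1 else 0 := by
  simp [hdual]

include hdual in
theorem trace_C_mul_D_of_ne {l m : Λ} (h : l ≠ m) (S T : M l) (U V : M m) :
    τ (C l S T * D m U V) = 0 := by
  rw [hdual, if_neg fun h' => h (congrArg Sigma.fst h')]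

include bas hbas hτsym hτnd hdual in
theorem sum_trace_C_mul_smul_D [Fintype Λ] [∀ l : Λ, Fintype (M l)] (a : A) :
    ∑ l : Λ, ∑ S : M l, ∑ T : M l, τ (C l S T * a) • D l T S = a := by
  rw [← sub_eq_zero]
  refine eq_zero_of_forall_trace_C_mul_eq_zero bas hbas hτsym hτnd fun l S T => ?_
  rw [mul_sub, map_sub, sub_eq_zero, Finset.mul_sum, map_sum, Finset.sum_eq_single l]
  · simp [Finset.mul_sum, trace_C_mul_D_self hdual, ite_and, Finset.sum_ite_eq]
  · intro m _ hm
    simp [Finset.mul_sum, trace_C_mul_D_of_ne hdual (Ne.symm hm)]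
  · simp

variable (star : A →ₗ[K] A) (hstar : ∀ a b : A, star (a * b) = star b * star a)
  (hstarC : ∀ (l : Λ) (S T : M l), star (C l S T) = C l T S)

include bas hbas hstarC in
theorem star_star_eq (x : A) : star (star x) = x := by
  have h : star ∘ₗ star = LinearMap.id := bas.ext fun ⟨l, S, T⟩ => by simp [hbas, hstarC]
  exact LinearMap.congr_fun h x

variable [PartialOrder Λ]

variable (K) in
def lowerCellSpan (C : ∀ l : Λ, M l → M l → A) (l : Λ) : Submodule K A :=
  Submodule.span K {x : A | ∃ μ : Λ, μ < l ∧ ∃ U V : M μ, x = C μ U V}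

variable (K) in
def upperCellSpan (D : ∀ l : Λ, M l → M l → A) (l : Λ) : Submodule K A :=
  Submodule.span K {x : A | ∃ μ : Λ, l < μ ∧ ∃ U V : M μ, x = D μ U V}

variable (Φ Φ' : ∀ l : Λ, M l → M l → K)
  (hΦ : ∀ (l : Λ) (S T U V : M l),
    C l S T * C l U V - Φ l T U • C l S V ∈ lowerCellSpan K C l)
  (hΦ' : ∀ (l : Λ) (S T U V : M l),
    D l S T * D l U V - Φ' l T U • D l S V ∈ upperCellSpan K D l)

include hdual in
theorem trace_mul_D_eq_zero_of_mem_lowerCellSpan {l m : Λ} (h : ¬ m < l) {w : A}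
    (hw : w ∈ lowerCellSpan K C l) (U V : M m) : τ (w * D m U V) = 0 := by
  suffices lowerCellSpan K C l ≤ LinearMap.ker (τ ∘ₗ LinearMap.mulRight K (D m U V)) from
    this hw
  refine Submodule.span_le.mpr ?_
  rintro _ ⟨ρ, hρ, X, Y, rfl⟩
  exact trace_C_mul_D_of_ne hdual (by rintro rfl; exact h hρ) X Y U V

include hstarC in
theorem map_star_lowerCellSpan_le (l : Λ) :
    (lowerCellSpan K C l).map star ≤ lowerCellSpan K C l := by
  rw [lowerCellSpan, Submodule.map_span_le]
  rintro _ ⟨μ, hμ, U, V, rfl⟩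
  rw [hstarC]
  exact Submodule.subset_span ⟨μ, hμ, V, U, rfl⟩

include hdual hΦ in
theorem trace_C_mul_C_mul_D (l : Λ) (S T U V W X : M l) :
    τ (C l S T * C l U V * D l W X) = Φ l T U * τ (C l S V * D l W X) := by
  have h := trace_mul_D_eq_zero_of_mem_lowerCellSpan hdual (lt_irrefl l) (hΦ l S T U V) W X
  rwa [sub_mul, map_sub, sub_eq_zero, smul_mul_assoc, map_smul, smul_eq_mul] at h

variable [∀ l : Λ, Fintype (M l)]
  (hcell : ∀ (a : A) (l : Λ), ∃ r : M l → M l → K, ∀ S T : M l,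
    a * C l S T - ∑ S' : M l, r S' S • C l S' T ∈ lowerCellSpan K C l)

include hdual hcell in
theorem exists_trace_mul_C_mul_D (a : A) (l : Λ) :
    ∃ r : M l → M l → K, ∀ (S T : M l) (m : Λ), ¬ m < l → ∀ U V : M m,
      τ (a * (C l S T * D m U V)) = ∑ S' : M l, r S' S * τ (C l S' T * D m U V) := by
  obtain ⟨r, hr⟩ := hcell a l
  refine ⟨r, fun S T m hm U V => ?_⟩
  have hlow := trace_mul_D_eq_zero_of_mem_lowerCellSpan hdual hm (hr S T) U V
  rw [sub_mul, map_sub, sub_eq_zero, Finset.sum_mul, map_sum] at hlow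
  rw [← mul_assoc, hlow]
  simp only [smul_mul_assoc, map_smul, smul_eq_mul]

include hdual hcell in
theorem trace_mul_C_mul_D_of_ne_of_not_lt (a : A) {l m : Λ} (hne : l ≠ m) (hlt : ¬ m < l)
    (S T : M l) (U V : M m) : τ (a * (C l S T * D m U V)) = 0 := by
  obtain ⟨r, hr⟩ := exists_trace_mul_C_mul_D hdual hcell a l
  simp [hr S T m hlt, trace_C_mul_D_of_ne hdual hne]

include hdual hcell in
theorem trace_mul_C_mul_D_self_of_ne (a : A) {l : Λ} {T U : M l} (h : T ≠ U) (S V : M l) :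
    τ (a * (C l S T * D l U V)) = 0 := by
  obtain ⟨r, hr⟩ := exists_trace_mul_C_mul_D hdual hcell a l
  simp [hr S T l (lt_irrefl l), trace_C_mul_D_self hdual, h]

include bas hbas hτsym hτnd hdual hcell in
theorem C_mul_D_eq_zero {l m : Λ} (hne : l ≠ m) (hlt : ¬ m < l) (S T : M l) (U V : M m) :
    C l S T * D m U V = 0 :=
  eq_zero_of_forall_trace_C_mul_eq_zero bas hbas hτsym hτnd fun _ P Q =>
    trace_mul_C_mul_D_of_ne_of_not_lt hdual hcell (C _ P Q) hne hlt S T U V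

include bas hbas hτsym hτnd hdual hcell in
theorem C_mul_eq_zero_of_mem_upperCellSpan {l ρ : Λ} (h : ¬ l < ρ) {v : A}
    (hv : v ∈ upperCellSpan K D l) (X Y : M ρ) : C ρ X Y * v = 0 := by
  suffices upperCellSpan K D l ≤ LinearMap.ker (LinearMap.mulLeft K (C ρ X Y)) from this hv
  refine Submodule.span_le.mpr ?_
  rintro _ ⟨ν, hν, U, V, rfl⟩
  exact C_mul_D_eq_zero bas hbas hτsym hτnd hdual hcell (by rintro rfl; exact h hν)
    (fun h' => h (hν.trans h')) X Y U V

include bas hbas hcell hstar hstarC in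
theorem exists_C_mul_sub_sum_mem_lowerCellSpan (a : A) (l : Λ) :
    ∃ r : M l → M l → K, ∀ S T : M l,
      C l S T * a - ∑ T' : M l, r T' T • C l S T' ∈ lowerCellSpan K C l := by
  obtain ⟨r, hr⟩ := hcell (star a) l
  refine ⟨r, fun S T => ?_⟩
  have h := map_star_lowerCellSpan_le star hstarC l (Submodule.mem_map_of_mem (hr T S))
  simpa [hstar, hstarC, star_star_eq bas hbas star hstarC, map_sum] using h

include bas hbas hdual hcell hstar hstarC in
theorem trace_C_mul_mul_D_of_ne_of_not_lt (b : A) {l m : Λ} (hne : l ≠ m) (hlt : ¬ m < l)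
    (S T : M l) (U V : M m) : τ (C l S T * b * D m U V) = 0 := by
  obtain ⟨r, hr⟩ := exists_C_mul_sub_sum_mem_lowerCellSpan bas hbas star hstar hstarC hcell b l
  have h := trace_mul_D_eq_zero_of_mem_lowerCellSpan hdual hlt (hr S T) U V
  rw [sub_mul, map_sub, sub_eq_zero] at h
  simp [h, Finset.sum_mul, trace_C_mul_D_of_ne hdual hne]

include bas hbas hτsym hτnd hdual hcell hΦ' in
theorem trace_C_mul_D_mul_D (l : Λ) (S T U V W X : M l) :
    τ (C l S T * (D l U V * D l W X)) = Φ' l V W * τ (C l S T * D l U X) := by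
  have h := C_mul_eq_zero_of_mem_upperCellSpan bas hbas hτsym hτnd hdual hcell (lt_irrefl l)
    (hΦ' l U V W X) S T
  rw [mul_sub, sub_eq_zero] at h
  rw [h, mul_smul_comm, map_smul, smul_eq_mul]

include bas hbas hτsym hdual hcell hstar hstarC in
theorem trace_C_mul_D_mul_C_mul_D_of_ne {l m : Λ} (h : l ≠ m) (P Q R W : M m) (S T U V : M l) :
    τ (C m P Q * D m R W * (C l S T * D l U V)) = 0 := by
  by_cases hlt : m < l
  · simpa only [mul_assoc] using trace_C_mul_mul_D_of_ne_of_not_lt bas hbas hdual star hstar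
      hstarC hcell (D m R W * C l S T) (Ne.symm h) (lt_asymm hlt) P Q U V
  · rw [hτsym]
    simpa only [mul_assoc] using trace_C_mul_mul_D_of_ne_of_not_lt bas hbas hdual star hstar
      hstarC hcell (D l U V * C m P Q) h hlt S T R W

variable [Fintype Λ]

include bas hbas hτsym hτnd hdual hcell in
theorem C_mul_D_mul_eq_sum (a : A) (l : Λ) (S T V : M l) :
    C l S T * (D l T V * a) =
      ∑ P : M l, τ (a * (C l P T * D l T V)) • (C l S T * D l T P) := by
  have hswap : ∀ (m : Λ) (P Q : M m),
      τ (C m P Q * (D l T V * a)) = τ (a * (C m P Q * D l T V)) := fun m P Q => by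
    rw [← mul_assoc, hτsym]
  conv_lhs => rw [← sum_trace_C_mul_smul_D bas hbas hτsym hτnd hdual (D l T V * a)]
  simp only [Finset.mul_sum, mul_smul_comm, hswap]
  rw [Finset.sum_eq_single l]
  · refine Finset.sum_congr rfl fun P _ => Finset.sum_eq_single T (fun Q _ hQ => ?_) (by simp)
    rw [trace_mul_C_mul_D_self_of_ne hdual hcell a hQ, zero_smul]
  · intro m _ hm
    refine Finset.sum_eq_zero fun P _ => Finset.sum_eq_zero fun Q _ => ?_
    by_cases hlt : l < m
    · rw [C_mul_D_eq_zero bas hbas hτsym hτnd hdual hcell (Ne.symm hm) (lt_asymm hlt), smul_zero]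
    · rw [trace_mul_C_mul_D_of_ne_of_not_lt hdual hcell a hm hlt, zero_smul]
  · simp

variable (k : Λ → K)
  (hk : ∀ l : Λ, Matrix.of (Φ l) * Matrix.of (Φ' l) = k l • (1 : Matrix (M l) (M l) K))

include bas hbas hτsym hτnd hdual hcell hΦ hΦ' hk in
theorem trace_C_mul_D_mul_C_mul_D_self (l : Λ) (U P S : M l) :
    τ (C l U U * D l U U * (C l P S * D l S S)) = if P = U ∧ U = S then k l else 0 := by
  have hkS : ∑ Q : M l, Φ l S Q * Φ' l Q S = k l := by
    simpa [Matrix.mul_apply] using congrFun (congrFun (hk l) S) S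
  calc τ (C l U U * D l U U * (C l P S * D l S S))
      = τ (C l U U * (D l U U * C l P S) * D l S S) := by simp only [mul_assoc]
    _ = ∑ Q : M l, τ (C l P S * C l Q U * D l U U) * τ (C l U U * (D l U Q * D l S S)) := by
        rw [C_mul_D_mul_eq_sum bas hbas hτsym hτnd hdual hcell, Finset.sum_mul, map_sum]
        simp only [smul_mul_assoc, map_smul, smul_eq_mul, mul_assoc]
    _ = ∑ Q : M l,
          (Φ l S Q * if P = U then 1 else 0) * (Φ' l Q S * if U = S then 1 else 0) := by
        simp [trace_C_mul_C_mul_D hdual Φ hΦ,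
          trace_C_mul_D_mul_D bas hbas hτsym hτnd hdual Φ' hΦ' hcell, trace_C_mul_D_self hdual]
    _ = if P = U ∧ U = S then k l else 0 := by
        rw [← hkS]
        split_ifs <;> simp_all

include bas hbas hτsym hτnd hdual hcell hΦ hΦ' hk in
theorem C_mul_D_mul_C_mul_D_self (l : Λ) (S U : M l) :
    C l S S * D l S S * (C l U U * D l U U) = if U = S then k l • (C l S S * D l S S) else 0 := by
  rw [mul_assoc, C_mul_D_mul_eq_sum bas hbas hτsym hτnd hdual hcell,
    Finset.sum_congr rfl fun P _ => by
      rw [trace_C_mul_D_mul_C_mul_D_self bas hbas hτsym hτnd hdual Φ Φ' hΦ hΦ' hcell k hk]]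
  split_ifs with h
  · subst h
    simp
  · simp [h]

include bas hbas hτsym hτnd hdual hcell hstar hstarC in
theorem C_mul_D_mul_C_mul_D_of_ne {l m : Λ} (h : l ≠ m) (S : M l) (U : M m) :
    C l S S * D l S S * (C m U U * D m U U) = 0 := by
  rw [mul_assoc, C_mul_D_mul_eq_sum bas hbas hτsym hτnd hdual hcell]
  exact Finset.sum_eq_zero fun P _ => by
    rw [trace_C_mul_D_mul_C_mul_D_of_ne bas hbas hτsym hdual star hstar hstarC hcell h, zero_smul]

end SymmetricCellular

/-- Lemma 4.2: `e_{λ,c} e_{μ,c′} = δ_{λμ} δ_{cc′} k_λ e_{λ,c}`. -/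
theorem stmt8
    {K A : Type} [Field K] [Ring A] [Algebra K A] [FiniteDimensional K A]
    {Λ : Type} [PartialOrder Λ] [Fintype Λ]
    {M : Λ → Type} [∀ l : Λ, Fintype (M l)]
    (C : ∀ l : Λ, M l → M l → A)
    (bas : Module.Basis (Σ l : Λ, M l × M l) K A)
    (hbas : ∀ (l : Λ) (S T : M l), bas ⟨l, (S, T)⟩ = C l S T)
    (star : A →ₗ[K] A)
    (hstar : ∀ a b : A, star (a * b) = star b * star a)
    (hstarC : ∀ (l : Λ) (S T : M l), star (C l S T) = C l T S)
    (hcell : ∀ (a : A) (l : Λ), ∃ r : M l → M l → K, ∀ S T : M l,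
      a * C l S T - ∑ S' : M l, r S' S • C l S' T ∈
        Submodule.span K {x : A | ∃ μ : Λ, μ < l ∧ ∃ U V : M μ, x = C μ U V})
    (τ : A →ₗ[K] K)
    (hτsym : ∀ a b : A, τ (a * b) = τ (b * a))
    (hτnd : ∀ a : A, a ≠ 0 → ∃ b : A, τ (a * b) ≠ 0)
    (D : ∀ l : Λ, M l → M l → A)
    (hdual : ∀ (l μ : Λ) (S T : M l) (U V : M μ),
      τ (C l S T * D μ U V) =
        if (⟨l, (S, T)⟩ : Σ l : Λ, M l × M l) = ⟨μ, (V, U)⟩ then 1 else 0)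
    (𝒜 : ℤ → Submodule K A) [GradedAlgebra 𝒜]
    (deg : ∀ l : Λ, M l → ℤ)
    (hhom : ∀ (l : Λ) (S T : M l), C l S T ∈ 𝒜 (deg l S + deg l T))
    (d : ℤ)
    (hτhom : ∀ i : ℤ, i ≠ -d → ∀ a ∈ 𝒜 i, τ a = 0)
    (Φ Φ' : ∀ l : Λ, M l → M l → K)
    (hΦ : ∀ (l : Λ) (S T U V : M l),
      C l S T * C l U V - Φ l T U • C l S V ∈
        Submodule.span K {x : A | ∃ μ : Λ, μ < l ∧ ∃ U' V' : M μ, x = C μ U' V'})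
    (hΦ' : ∀ (l : Λ) (S T U V : M l),
      D l S T * D l U V - Φ' l T U • D l S V ∈
        Submodule.span K {x : A | ∃ μ : Λ, l < μ ∧ ∃ U' V' : M μ, x = D μ U' V'})
    (k : Λ → K)
    (hk : ∀ l : Λ, (Matrix.of (Φ l)) * (Matrix.of (Φ' l)) = k l • (1 : Matrix (M l) (M l) K))
    (e : ∀ _ : Λ, ℤ → A)
    (he : ∀ (l : Λ) (c : ℤ),
      e l c = ∑ S ∈ Finset.univ.filter (fun S : M l => deg l S = c), C l S S * D l S S)
    :
    ∀ (l μ : Λ) (c c' : ℤ),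
      e l c * e μ c' = if l = μ ∧ c = c' then k l • e l c else 0 := by
  intro l μ c c'
  rw [he l c, he μ c', Finset.sum_mul_sum]
  by_cases hlμ : l = μ
  · subst hlμ
    simp only [SymmetricCellular.C_mul_D_mul_C_mul_D_self bas hbas hτsym hτnd hdual
      Φ Φ' hΦ hΦ' hcell k hk, Finset.sum_ite_eq', Finset.mem_filter, Finset.mem_univ, true_and]
    by_cases hcc : c = c'
    · subst hcc
      rw [if_pos rfl, Finset.smul_sum]
      exact Finset.sum_congr rfl fun S hS => if_pos (Finset.mem_filter.mp hS).2
    · rw [if_neg hcc]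
      exact Finset.sum_eq_zero fun S hS =>
        if_neg fun h => hcc ((Finset.mem_filter.mp hS).2.symm.trans h)
  · rw [if_neg fun h => hlμ h.1]
    exact Finset.sum_eq_zero fun S _ => Finset.sum_eq_zero fun U _ =>
      SymmetricCellular.C_mul_D_mul_C_mul_D_of_ne bas hbas hτsym hτnd hdual star hstar hstarC
        hcell hlμ S U
end

section
/- Let A be a graded symmetric cellular algebra with homogeneous symmetrizing trace. Then for every λ ∈ Λ and c ∈ ℤ, the element e_{λ,c} = Σ_{S∈M(λ), deg(S)=c} C^λ_{S,S} D^λ_{S,S} lies in the centralizer Z_A(A_0) of the degree-zero component. Consequently L_gr(A) = span_K{ e_{λ,c} : λ∈Λ, c∈ℤ } ⊆ Z_A(A_0). -/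
/-!
Write `r_a` for the matrix by which `a ∈ A` acts on the cell module of `λ`, i.e.
`a C_{S,T} ≡ ∑ r_a(S', S) C_{S',T}` modulo lower cells (`IsCellCoeff`); then `r_{a'a} = r_{a'} r_a`.
Duality of `C` and `D` gives `τ(a C_{S,S} D_{S,S}) = r_a(S, S)`, so `τ(e_{λ,c} a)` is the trace of
the degree-`c` diagonal block of `r_a`. For `b ∈ A₀` the matrix `r_b` may be taken block diagonal
by degree (project the congruence to one degree; all `C` are homogeneous). Hence `τ(e b z)` and
`τ(b e z) = τ(e z b)` are the traces of the degree-`c` blocks of `r_b r_z` and `r_z r_b`, which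
agree, and nondegeneracy of `τ` gives `e b = b e`.
-/

open scoped Classical

open Finset

theorem Matrix.sum_filter_mul_apply_self_comm {n ι R : Type*} [Fintype n] [CommSemiring R]
    (deg : n → ι) (c : ι) [DecidablePred fun i => deg i = c] {t : Matrix n n R}
    (ht : ∀ i j, deg i ≠ deg j → t i j = 0) (s : Matrix n n R) :
    ∑ i ∈ univ.filter (fun i => deg i = c), (t * s) i i
      = ∑ i ∈ univ.filter (fun i => deg i = c), (s * t) i i := by
  set F := univ.filter fun i => deg i = c
  have restrict : ∀ (f : n → n → R), (∀ i ∈ F, ∀ j ∉ F, f i j = 0) →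
      ∑ i ∈ F, ∑ j, f i j = ∑ i ∈ F, ∑ j ∈ F, f i j := fun f hf =>
    sum_congr rfl fun i hi => (sum_subset (subset_univ F) fun j _ hj => hf i hi j hj).symm
  have hF : ∀ i ∈ F, ∀ j ∉ F, deg i ≠ deg j := fun i hi j hj h =>
    hj (mem_filter.2 ⟨mem_univ j, h ▸ (mem_filter.1 hi).2⟩)
  simp only [Matrix.mul_apply]
  rw [restrict _ fun i hi j hj => by rw [ht i j (hF i hi j hj), zero_mul],
    restrict _ fun i hi j hj => by rw [ht j i (hF i hi j hj).symm, mul_zero], sum_comm]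
  exact sum_congr rfl fun _ _ => sum_congr rfl fun _ _ => mul_comm _ _

theorem LinearMap.eq_of_forall_apply_mul_eq {K A : Type*} [CommRing K] [Ring A] [Algebra K A]
    {τ : A →ₗ[K] K} (hτnd : ∀ a : A, a ≠ 0 → ∃ b : A, τ (a * b) ≠ 0) {x y : A}
    (h : ∀ z, τ (x * z) = τ (y * z)) : x = y := by
  by_contra hne
  obtain ⟨z, hz⟩ := hτnd (x - y) (sub_ne_zero.2 hne)
  exact hz (by rw [sub_mul, map_sub, h, sub_self])

namespace Cellular

variable (K : Type*) {A : Type*} [CommRing K] [Ring A] [Algebra K A]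
  {Λ : Type*} [PartialOrder Λ] {M : Λ → Type*} (C : ∀ l : Λ, M l → M l → A)

def lowerSpan (l : Λ) : Submodule K A :=
  Submodule.span K {x : A | ∃ μ : Λ, μ < l ∧ ∃ U V : M μ, x = C μ U V}

variable {K} in
def IsDualBasis (τ : A →ₗ[K] K) (D : ∀ l : Λ, M l → M l → A) : Prop :=
  ∀ (l μ : Λ) (S T : M l) (U V : M μ),
    τ (C l S T * D μ U V) = if (⟨l, (S, T)⟩ : Σ l : Λ, M l × M l) = ⟨μ, (V, U)⟩ then 1 else 0

def IsCellCoeff [∀ l, Fintype (M l)] (a : A) (l : Λ) (r : Matrix (M l) (M l) K) : Prop :=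
  ∀ S T : M l, a * C l S T - ∑ S' : M l, r S' S • C l S' T ∈ lowerSpan K C l

variable {K C}

theorem cell_mem_lowerSpan {μ l : Λ} (h : μ < l) (U V : M μ) : C μ U V ∈ lowerSpan K C l :=
  Submodule.subset_span ⟨μ, h, U, V, rfl⟩

theorem lowerSpan_mono {μ l : Λ} (h : μ ≤ l) : lowerSpan K C μ ≤ lowerSpan K C l :=
  Submodule.span_mono fun _ ⟨ν, hν, U, V, hx⟩ => ⟨ν, hν.trans_le h, U, V, hx⟩

theorem trace_lowerSpan_mul_dual {D : ∀ l : Λ, M l → M l → A} {τ : A →ₗ[K] K}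
    (hdual : IsDualBasis C τ D)
    {l : Λ} (S T : M l) {x : A} (hx : x ∈ lowerSpan K C l) : τ (x * D l S T) = 0 := by
  induction hx using Submodule.span_induction with
  | mem x hx =>
    obtain ⟨μ, hμ, U, V, rfl⟩ := hx
    rw [hdual, if_neg fun h => hμ.ne (Sigma.mk.inj_iff.1 h).1]
  | zero => simp
  | add x y _ _ hx hy => rw [add_mul, map_add, hx, hy, add_zero]
  | smul k x _ hx => rw [smul_mul_assoc, map_smul, hx, smul_zero]

theorem decompose_mem_lowerSpan (𝒜 : ℤ → Submodule K A) [DirectSum.Decomposition 𝒜]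
    {deg : ∀ l : Λ, M l → ℤ} (hhom : ∀ (l : Λ) (S T : M l), C l S T ∈ 𝒜 (deg l S + deg l T))
    {l : Λ} (i : ℤ) {x : A} (hx : x ∈ lowerSpan K C l) :
    (DirectSum.decompose 𝒜 x i : A) ∈ lowerSpan K C l := by
  induction hx using Submodule.span_induction with
  | mem x hx =>
    obtain ⟨μ, hμ, U, V, rfl⟩ := hx
    rw [DirectSum.decompose_of_mem 𝒜 (hhom μ U V), DirectSum.coe_of_apply]
    split_ifs
    · exact cell_mem_lowerSpan hμ U V
    · exact zero_mem _
  | zero => simp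
  | add x y _ _ hx hy =>
    rw [DirectSum.decompose_add, DirectSum.add_apply, Submodule.coe_add]
    exact add_mem hx hy
  | smul k x _ hx =>
    rw [DirectSum.decompose_smul, DirectSum.smul_apply, Submodule.coe_smul]
    exact Submodule.smul_mem _ _ hx

variable [∀ l, Fintype (M l)]

theorem mul_mem_lowerSpan {a : A} (ha : ∀ μ, ∃ r, IsCellCoeff K C a μ r) {l : Λ} {x : A}
    (hx : x ∈ lowerSpan K C l) : a * x ∈ lowerSpan K C l := by
  induction hx using Submodule.span_induction with
  | mem x hx =>
    obtain ⟨μ, hμ, U, V, rfl⟩ := hx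
    obtain ⟨r, hr⟩ := ha μ
    have hsum : ∑ U', r U' U • C μ U' V ∈ lowerSpan K C l :=
      sum_mem fun U' _ => Submodule.smul_mem _ _ (cell_mem_lowerSpan hμ U' V)
    simpa only [sub_add_cancel] using add_mem (lowerSpan_mono hμ.le (hr U V)) hsum
  | zero => simp
  | add x y _ _ hx hy => rw [mul_add]; exact add_mem hx hy
  | smul k x _ hx => rw [mul_smul_comm]; exact Submodule.smul_mem _ _ hx

theorem IsCellCoeff.mul {a a' : A} {l : Λ} {r r' : Matrix (M l) (M l) K}
    (h : IsCellCoeff K C a l r) (h' : IsCellCoeff K C a' l r')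
    (ha' : ∀ μ, ∃ r, IsCellCoeff K C a' μ r) : IsCellCoeff K C (a' * a) l (r' * r) := by
  intro S T
  have key : a' * a * C l S T - ∑ S'', (r' * r) S'' S • C l S'' T
      = a' * (a * C l S T - ∑ S', r S' S • C l S' T)
        + ∑ S', r S' S • (a' * C l S' T - ∑ S'', r' S'' S' • C l S'' T) := by
    simp only [Matrix.mul_apply, sum_smul, mul_sub, mul_sum, mul_smul_comm, smul_sub, smul_sum,
      smul_smul, sum_sub_distrib, mul_assoc, mul_comm (r' _ _)]
    rw [sum_comm (s := univ) (t := univ)]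
    abel
  rw [key]
  exact add_mem (mul_mem_lowerSpan ha' (h S T))
    (sum_mem fun S' _ => Submodule.smul_mem _ _ (h' S' T))

theorem IsCellCoeff.of_mem_zero (𝒜 : ℤ → Submodule K A) [GradedAlgebra 𝒜]
    {deg : ∀ l : Λ, M l → ℤ} (hhom : ∀ (l : Λ) (S T : M l), C l S T ∈ 𝒜 (deg l S + deg l T))
    {b : A} (hb : b ∈ 𝒜 0) {l : Λ} {r : Matrix (M l) (M l) K} (h : IsCellCoeff K C b l r) :
    IsCellCoeff K C b l (Matrix.of fun S' S => if deg l S' = deg l S then r S' S else 0) := by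
  intro S T
  have hbC : b * C l S T ∈ 𝒜 (deg l S + deg l T) := by
    simpa only [zero_add] using SetLike.mul_mem_graded hb (hhom l S T)
  convert decompose_mem_lowerSpan 𝒜 hhom (deg l S + deg l T) (h S T) using 1
  rw [DirectSum.decompose_sub, DirectSum.sub_apply, Submodule.coe_sub,
    DirectSum.decompose_of_mem_same 𝒜 hbC, DirectSum.decompose_sum, DFinsupp.finsetSum_apply,
    Submodule.coe_sum]
  congr 1
  refine sum_congr rfl fun S' _ => ?_
  rw [DirectSum.decompose_smul, DirectSum.smul_apply, Submodule.coe_smul,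
    DirectSum.decompose_of_mem 𝒜 (hhom l S' T), DirectSum.coe_of_apply, Matrix.of_apply]
  by_cases hS' : deg l S' = deg l S <;> simp [hS']

section Trace

variable {D : ∀ l : Λ, M l → M l → A} {τ : A →ₗ[K] K}

theorem IsCellCoeff.trace_mul_cell_mul_dual
    (hdual : IsDualBasis C τ D)
    {a : A} {l : Λ} {r : Matrix (M l) (M l) K}
    (h : IsCellCoeff K C a l r) (S T : M l) : τ (a * C l S T * D l T S) = r S S := by
  rw [← sub_add_cancel (a * C l S T) (∑ S', r S' S • C l S' T), add_mul, map_add,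
    trace_lowerSpan_mul_dual hdual T S (h S T), zero_add, sum_mul, map_sum]
  simp [hdual _ _ _ _ _ _]

theorem IsCellCoeff.trace_sum_cell_mul_dual_mul
    (hdual : IsDualBasis C τ D)
    (hτsym : ∀ a b : A, τ (a * b) = τ (b * a))
    {a : A} {l : Λ} {r : Matrix (M l) (M l) K} (h : IsCellCoeff K C a l r) (F : Finset (M l)) :
    τ ((∑ S ∈ F, C l S S * D l S S) * a) = ∑ S ∈ F, r S S := by
  rw [sum_mul, map_sum]
  refine sum_congr rfl fun S _ => ?_
  rw [hτsym, ← mul_assoc, h.trace_mul_cell_mul_dual hdual]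

theorem sum_cell_mul_dual_mem_centralizer
    (hcell : ∀ (a : A) (l : Λ), ∃ r, IsCellCoeff K C a l r)
    (hτsym : ∀ a b : A, τ (a * b) = τ (b * a))
    (hτnd : ∀ a : A, a ≠ 0 → ∃ b : A, τ (a * b) ≠ 0)
    (hdual : IsDualBasis C τ D)
    (𝒜 : ℤ → Submodule K A) [GradedAlgebra 𝒜]
    {deg : ∀ l : Λ, M l → ℤ} (hhom : ∀ (l : Λ) (S T : M l), C l S T ∈ 𝒜 (deg l S + deg l T))
    (l : Λ) (c : ℤ) :
    ∑ S ∈ univ.filter (fun S : M l => deg l S = c), C l S S * D l S S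
      ∈ Subalgebra.centralizer K (𝒜 0 : Set A) := by
  set F := univ.filter fun S : M l => deg l S = c
  set e := ∑ S ∈ F, C l S S * D l S S
  refine (Subalgebra.mem_centralizer_iff K).2 fun b hb => ?_
  obtain ⟨r, hr⟩ := hcell b l
  set t : Matrix (M l) (M l) K := Matrix.of fun S' S => if deg l S' = deg l S then r S' S else 0
  have ht : IsCellCoeff K C b l t := hr.of_mem_zero 𝒜 hhom hb
  refine (LinearMap.eq_of_forall_apply_mul_eq hτnd fun z => ?_).symm
  obtain ⟨s, hs⟩ := hcell z l
  calc τ (e * b * z) = τ (e * (b * z)) := by rw [mul_assoc]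
    _ = ∑ S ∈ F, (t * s) S S := (hs.mul ht (hcell b)).trace_sum_cell_mul_dual_mul hdual hτsym F
    _ = ∑ S ∈ F, (s * t) S S :=
      Matrix.sum_filter_mul_apply_self_comm (deg l) c (fun S' S h => if_neg h) s
    _ = τ (e * (z * b)) :=
      ((ht.mul hs (hcell z)).trace_sum_cell_mul_dual_mul hdual hτsym F).symm
    _ = τ (b * e * z) := by rw [← mul_assoc, hτsym, mul_assoc]

end Trace

end Cellular

/-- Lemma 4.2 / Theorem 4.4 (second inclusion): each `e_{λ,c}` lies in the
centralizer of `A₀`, hence `L_gr(A) ⊆ Z_A(A₀)`. -/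
theorem stmt9
    {K A : Type} [Field K] [Ring A] [Algebra K A] [FiniteDimensional K A]
    {Λ : Type} [PartialOrder Λ] [Fintype Λ]
    {M : Λ → Type} [∀ l : Λ, Fintype (M l)]
    (C : ∀ l : Λ, M l → M l → A)
    (bas : Module.Basis (Σ l : Λ, M l × M l) K A)
    (hbas : ∀ (l : Λ) (S T : M l), bas ⟨l, (S, T)⟩ = C l S T)
    (star : A →ₗ[K] A)
    (hstar : ∀ a b : A, star (a * b) = star b * star a)
    (hstarC : ∀ (l : Λ) (S T : M l), star (C l S T) = C l T S)
    (hcell : ∀ (a : A) (l : Λ), ∃ r : M l → M l → K, ∀ S T : M l,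
      a * C l S T - ∑ S' : M l, r S' S • C l S' T ∈
        Submodule.span K {x : A | ∃ μ : Λ, μ < l ∧ ∃ U V : M μ, x = C μ U V})
    (τ : A →ₗ[K] K)
    (hτsym : ∀ a b : A, τ (a * b) = τ (b * a))
    (hτnd : ∀ a : A, a ≠ 0 → ∃ b : A, τ (a * b) ≠ 0)
    (D : ∀ l : Λ, M l → M l → A)
    (hdual : ∀ (l μ : Λ) (S T : M l) (U V : M μ),
      τ (C l S T * D μ U V) =
        if (⟨l, (S, T)⟩ : Σ l : Λ, M l × M l) = ⟨μ, (V, U)⟩ then 1 else 0)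
    (𝒜 : ℤ → Submodule K A) [GradedAlgebra 𝒜]
    (deg : ∀ l : Λ, M l → ℤ)
    (hhom : ∀ (l : Λ) (S T : M l), C l S T ∈ 𝒜 (deg l S + deg l T))
    (d : ℤ)
    (hτhom : ∀ i : ℤ, i ≠ -d → ∀ a ∈ 𝒜 i, τ a = 0)
    (e : ∀ _ : Λ, ℤ → A)
    (he : ∀ (l : Λ) (c : ℤ),
      e l c = ∑ S ∈ Finset.univ.filter (fun S : M l => deg l S = c), C l S S * D l S S)
    :
    (∀ (l : Λ) (c : ℤ), ∀ b ∈ 𝒜 0, e l c * b = b * e l c) ∧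
    (∀ z ∈ Submodule.span K {z : A | ∃ (l : Λ) (c : ℤ), z = e l c},
      ∀ b ∈ 𝒜 0, z * b = b * z) := by
  have hmem : ∀ l c, e l c ∈ Subalgebra.centralizer K (𝒜 0 : Set A) := fun l c =>
    he l c ▸ Cellular.sum_cell_mul_dual_mem_centralizer hcell hτsym hτnd hdual 𝒜 hhom l c
  have hspan : Submodule.span K {z : A | ∃ (l : Λ) (c : ℤ), z = e l c}
      ≤ Subalgebra.toSubmodule (Subalgebra.centralizer K (𝒜 0 : Set A)) :=
    Submodule.span_le.2 fun _ ⟨l, c, hz⟩ => hz ▸ hmem l c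
  exact ⟨fun l c b hb => ((Subalgebra.mem_centralizer_iff K).1 (hmem l c) b hb).symm,
    fun z hz b hb => ((Subalgebra.mem_centralizer_iff K).1 (hspan hz) b hb).symm⟩
end

section
/- Let A be a finite dimensional semisimple K-algebra which is a graded symmetric cellular algebra with homogeneous symmetrizing trace τ of degree d and homogeneous cellular basis {C^λ_{S,T}}. Then d = 0. -/
/-!
Let `S` be the (finite, nonempty) set of degrees in which `A` is nonzero, with maximum `m` and
minimum `n`. Nondegeneracy of a trace of degree `-d` makes `S` symmetric under `i ↦ -d - i`,
so `m + n = -d`. If `m + n > 0`, then for `a` of degree `m` every product `a x a` lands in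
degrees above `m`, hence vanishes; a semisimple ring has no such nonzero `a`. The case
`m + n < 0` is symmetric, with `n` in place of `m`.
-/

theorem IsSemisimpleRing.eq_zero_of_forall_mul_mul_eq_zero {A : Type*} [Ring A]
    [IsSemisimpleRing A] {a : A} (h : ∀ x : A, a * x * a = 0) : a = 0 := by
  obtain ⟨J, hJ⟩ := exists_isCompl (Submodule.span A {a} : Submodule A A)
  obtain ⟨e, he, f, hf, hef⟩ := Submodule.mem_sup.mp (hJ.sup_eq_top ▸ Submodule.mem_top (x := 1))
  obtain ⟨r, rfl⟩ := Submodule.mem_span_singleton.mp he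
  -- `a = a (r a + f) = a r a + a f = a f`, so `a` lies in both `A a` and its complement `J`.
  have haf : a = a * f := by
    calc a = a * (r • a + f) := by rw [hef, mul_one]
    _ = a * f := by rw [mul_add, smul_eq_mul, ← mul_assoc, h r, zero_add]
  have haJ : a ∈ J := haf ▸ J.smul_mem a hf
  have : a ∈ (Submodule.span A {a} : Submodule A A) ⊓ J :=
    ⟨Submodule.mem_span_singleton_self a, haJ⟩
  simpa [hJ.inf_eq_bot] using this

section Graded

variable {ι K A : Type*} [DecidableEq ι] [CommSemiring K]

theorem GradedAlgebra.ne_bot_sub_of_ne_bot [AddCommGroup ι] [Semiring A] [Algebra K A]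
    (𝒜 : ι → Submodule K A) [GradedAlgebra 𝒜] {e : ι} (τ : A →ₗ[K] K)
    (hτnd : ∀ a : A, a ≠ 0 → ∃ b : A, τ (a * b) ≠ 0)
    (hτhom : ∀ i : ι, i ≠ e → ∀ a ∈ 𝒜 i, τ a = 0) {i : ι} (hi : 𝒜 i ≠ ⊥) :
    𝒜 (e - i) ≠ ⊥ := by
  intro hbot
  obtain ⟨a, ha, ha0⟩ := (Submodule.ne_bot_iff _).mp hi
  obtain ⟨b, hb⟩ := hτnd a ha0
  refine hb (DirectSum.Decomposition.inductionOn 𝒜 (by simp) ?_ ?_ b)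
  · intro j y
    by_cases hj : i + j = e
    · have hy : (y : A) ∈ 𝒜 (e - i) := by rw [← hj, add_sub_cancel_left]; exact y.2
      rw [hbot, Submodule.mem_bot] at hy
      simp [hy]
    · exact hτhom _ hj _ (SetLike.mul_mem_graded ha y.2)
  · intro x y hx hy
    rw [mul_add, map_add, hx, hy, add_zero]

theorem GradedAlgebra.eq_bot_of_forall_add_add_eq_bot [AddMonoid ι] [Ring A] [Algebra K A]
    [IsSemisimpleRing A] (𝒜 : ι → Submodule K A) [GradedAlgebra 𝒜] {i : ι}
    (h : ∀ j, 𝒜 j ≠ ⊥ → 𝒜 (i + j + i) = ⊥) : 𝒜 i = ⊥ := by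
  refine (Submodule.eq_bot_iff _).mpr fun a ha ↦
    IsSemisimpleRing.eq_zero_of_forall_mul_mul_eq_zero fun x ↦ ?_
  refine DirectSum.Decomposition.inductionOn 𝒜 (motive := fun x ↦ a * x * a = 0)
    (by simp) ?_ (fun x y hx hy ↦ by rw [mul_add, add_mul, hx, hy, add_zero]) x
  intro j y
  by_cases hj : 𝒜 j = ⊥
  · have hy : (y : A) = 0 := (Submodule.eq_bot_iff _).mp hj _ y.2
    simp [hy]
  · exact (Submodule.eq_bot_iff _).mp (h j hj) _
      (SetLike.mul_mem_graded (SetLike.mul_mem_graded ha y.2) ha)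

end Graded

open scoped Classical in
/-- Lemma 5.4: a finite dimensional semisimple graded symmetric cellular algebra
has homogeneous symmetrizing trace of degree `0`. -/
theorem stmt13
    {K A : Type} [Field K] [Ring A] [Algebra K A] [FiniteDimensional K A]
    {Λ : Type} [PartialOrder Λ] [Fintype Λ]
    {M : Λ → Type} [∀ l : Λ, Fintype (M l)]
    (C : ∀ l : Λ, M l → M l → A)
    (bas : Module.Basis (Σ l : Λ, M l × M l) K A)
    (hbas : ∀ (l : Λ) (S T : M l), bas ⟨l, (S, T)⟩ = C l S T)
    (star : A →ₗ[K] A)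
    (hstar : ∀ a b : A, star (a * b) = star b * star a)
    (hstarC : ∀ (l : Λ) (S T : M l), star (C l S T) = C l T S)
    (hcell : ∀ (a : A) (l : Λ), ∃ r : M l → M l → K, ∀ S T : M l,
      a * C l S T - ∑ S' : M l, r S' S • C l S' T ∈
        Submodule.span K {x : A | ∃ μ : Λ, μ < l ∧ ∃ U V : M μ, x = C μ U V})
    [Nontrivial A] [IsSemisimpleRing A]
    (τ : A →ₗ[K] K)
    (hτsym : ∀ a b : A, τ (a * b) = τ (b * a))
    (hτnd : ∀ a : A, a ≠ 0 → ∃ b : A, τ (a * b) ≠ 0)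
    (D : ∀ l : Λ, M l → M l → A)
    (hdual : ∀ (l μ : Λ) (S T : M l) (U V : M μ),
      τ (C l S T * D μ U V) =
        if (⟨l, (S, T)⟩ : Σ l : Λ, M l × M l) = ⟨μ, (V, U)⟩ then 1 else 0)
    (𝒜 : ℤ → Submodule K A) [GradedAlgebra 𝒜]
    (deg : ∀ l : Λ, M l → ℤ)
    (hhom : ∀ (l : Λ) (S T : M l), C l S T ∈ 𝒜 (deg l S + deg l T))
    (d : ℤ)
    (hτhom : ∀ i : ℤ, i ≠ -d → ∀ a ∈ 𝒜 i, τ a = 0)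
    :
    d = 0 := by
  set S := {i : ℤ | 𝒜 i ≠ ⊥}
  have hS : S.Finite := WellFoundedGT.finite_ne_bot_of_iSupIndep
    (DirectSum.Decomposition.isInternal 𝒜).submodule_iSupIndep
  have h0 : (0 : ℤ) ∈ S := (Submodule.ne_bot_iff _).mpr ⟨1, SetLike.one_mem_graded 𝒜, one_ne_zero⟩
  obtain ⟨m, hmS, hm⟩ : ∃ m ∈ S, ∀ i ∈ S, i ≤ m := S.exists_max_image id hS ⟨0, h0⟩
  obtain ⟨n, hnS, hn⟩ : ∃ n ∈ S, ∀ i ∈ S, n ≤ i := S.exists_min_image id hS ⟨0, h0⟩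
  have hpair {i : ℤ} (hi : i ∈ S) : -d - i ∈ S :=
    GradedAlgebra.ne_bot_sub_of_ne_bot 𝒜 τ hτnd hτhom hi
  have hmn : m + n = -d := by
    have := hn _ (hpair hmS)
    have := hm _ (hpair hnS)
    omega
  have hsandwich {i : ℤ} (h : ∀ j ∈ S, i + j + i ∉ S) : i ∉ S := fun hi ↦
    hi (GradedAlgebra.eq_bot_of_forall_add_add_eq_bot 𝒜 fun j hj ↦ of_not_not (h j hj))
  rcases lt_trichotomy (m + n) 0 with hneg | hzero | hpos
  · refine absurd hnS (hsandwich fun j hj hj' ↦ ?_)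
    have := hn _ hj'
    have := hm _ hj
    omega
  · omega
  · refine absurd hmS (hsandwich fun j hj hj' ↦ ?_)
    have := hm _ hj'
    have := hn _ hj
    omega
end

section
/- Let A be a finite dimensional graded symmetric cellular algebra with homogeneous symmetrizing trace. If L_gr(A) = Z_A(A_0), then A is semisimple. -/
/-!
Since `1 ∈ Z_A(A₀) = L_gr(A)`, write `1 = ∑ a_{λ,c} e_{λ,c}`, so that
`τ x = ∑ a_{λ,c} τ (x * e_{λ,c})`. By duality, `τ (x * e_{λ,c})` is the trace of `x` on the
degree-`c` part of the cell module `W(λ)`, and only the degree-zero component `x₀` contributes to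
it. If `x` lies in the Jacobson radical `J`, then so does `x₀`, because `J` is a graded ideal
(Bergman): for homogeneous `a`, `a * x_top` is the top component of `a * x ∈ J`, so products of
`N` such elements vanish once `J ^ N = 0`. Hence `x₀` acts nilpotently and preserves degrees on
`W(λ)`, all these traces vanish, and `τ J = 0`. Nondegeneracy of `τ` then gives `J = 0`, so the
Artinian ring `A` is semisimple.
-/

open scoped Classical
open DirectSum
open scoped Pointwise

section Jacobson

variable {R : Type*} [Ring R]

theorem mem_jacobson_of_forall_isNilpotent_mul {x : R} (h : ∀ y, IsNilpotent (y * x)) :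
    x ∈ Ring.jacobson R := by
  rw [← Ideal.jacobson_bot]
  refine Ideal.mem_jacobson_iff.mpr fun y => ?_
  obtain ⟨u, hu⟩ := (h y).isUnit_add_one
  refine ⟨↑u⁻¹, ?_⟩
  rw [Submodule.mem_bot, mul_assoc, ← mul_add_one, ← hu, Units.inv_mul, sub_self]

theorem isNilpotent_of_mem_jacobson [IsArtinianRing R] {x : R} (hx : x ∈ Ring.jacobson R) :
    IsNilpotent x := by
  obtain ⟨N, hN⟩ := IsArtinianRing.isNilpotent_jacobson_bot (R := R)
  refine ⟨N, ?_⟩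
  have := Ideal.pow_mem_pow (Ideal.jacobson_bot (R := R) ▸ hx) N
  rwa [hN, Ideal.zero_eq_bot, Ideal.mem_bot] at this

end Jacobson

section Graded

variable {R σ : Type*} [Ring R] [SetLike σ R] [AddSubgroupClass σ R] (𝒜 : ℤ → σ) [GradedRing 𝒜]

def HasDegreeLE (x : R) (m : ℤ) : Prop :=
  ∀ i, m < i → decompose 𝒜 x i = 0

variable {𝒜}

theorem HasDegreeLE.of_mem {x : R} {m : ℤ} (hx : x ∈ 𝒜 m) : HasDegreeLE 𝒜 x m := fun i hi => by
  ext; exact decompose_of_mem_ne 𝒜 hx hi.ne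

theorem HasDegreeLE.mul {u v : R} {p q : ℤ} (hu : HasDegreeLE 𝒜 u p) (hv : HasDegreeLE 𝒜 v q) :
    HasDegreeLE 𝒜 (u * v) (p + q) ∧
      (decompose 𝒜 (u * v) (p + q) : R) = decompose 𝒜 u p * decompose 𝒜 v q := by
  have hsupp : ∀ ij ∈ (decompose 𝒜 u).support ×ˢ (decompose 𝒜 v).support,
      ij.1 ≤ p ∧ ij.2 ≤ q := by
    rintro ⟨i, j⟩ hij
    simp only [Finset.mem_product, DFinsupp.mem_support_iff] at hij
    exact ⟨not_lt.mp fun h => hij.1 (hu i h), not_lt.mp fun h => hij.2 (hv j h)⟩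
  refine ⟨fun n hn => ?_, ?_⟩
  · ext
    rw [decompose_mul, coe_mul_apply, ZeroMemClass.coe_zero]
    refine Finset.sum_eq_zero fun ij hij => ?_
    rw [Finset.mem_filter] at hij
    have := hsupp ij hij.1
    omega
  · rw [decompose_mul, coe_mul_apply]
    refine Finset.sum_eq_single (p, q) (fun ij hij hne => ?_) fun hpq => ?_
    · rw [Finset.mem_filter] at hij
      have := hsupp ij hij.1
      exact absurd (Prod.ext (by omega) (by omega)) hne
    · simp only [Finset.mem_filter, Finset.mem_product, DFinsupp.mem_support_iff, and_true,
        not_and_or, not_not] at hpq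
      rcases hpq with h | h <;> simp [h]

theorem exists_hasDegreeLE_of_mem_pow {I : Ideal R} {x : R} (hx : x ∈ I) {m : ℤ}
    (hxm : HasDegreeLE 𝒜 x m) (n : ℕ) :
    ∀ z ∈ {z | ∃ i, ∃ h ∈ 𝒜 i, h * decompose 𝒜 x m = z} ^ n,
      ∃ w ∈ I ^ n, ∃ t, HasDegreeLE 𝒜 w t ∧ (decompose 𝒜 w t : R) = z := by
  induction n with
  | zero =>
    intro z hz
    rw [pow_zero, Set.mem_one] at hz
    subst hz
    have h1 : (1 : R) ∈ 𝒜 0 := SetLike.GradedOne.one_mem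
    refine ⟨1, ?_, 0, .of_mem h1, decompose_of_mem_same 𝒜 h1⟩
    rw [Submodule.pow_zero]
    exact Submodule.one_le.mp le_rfl
  | succ n ih =>
    rintro _ ⟨z, hz, _, ⟨i, h, hh, rfl⟩, rfl⟩
    obtain ⟨w, hw, t, hwt, rfl⟩ := ih z hz
    have hhx := (HasDegreeLE.of_mem hh).mul hxm
    refine ⟨w * (h * x), Submodule.pow_succ I ▸ Ideal.mul_mem_mul hw (I.mul_mem_left h hx),
      t + (i + m), (hwt.mul hhx.1).1, ?_⟩
    rw [(hwt.mul hhx.1).2, hhx.2, decompose_of_mem_same 𝒜 hh]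

theorem coe_decompose_mem_jacobson [IsArtinianRing R] {x : R} (hx : x ∈ Ring.jacobson R) {m : ℤ}
    (hxm : HasDegreeLE 𝒜 x m) : (decompose 𝒜 x m : R) ∈ Ring.jacobson R := by
  set S := {z | ∃ i, ∃ h ∈ 𝒜 i, h * (decompose 𝒜 x m : R) = z}
  obtain ⟨N, hN⟩ := IsArtinianRing.isNilpotent_jacobson_bot (R := R)
  rw [Ideal.jacobson_bot] at hN
  -- A product of `N` elements of `S` is the top component of an element of `J ^ N = 0`.
  have hSN : Submodule.span ℕ (S ^ N) = ⊥ := by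
    refine Submodule.span_eq_bot.mpr fun z hz => ?_
    obtain ⟨w, hw, t, -, rfl⟩ := exists_hasDegreeLE_of_mem_pow hx hxm N z hz
    rw [hN, Ideal.zero_eq_bot, Ideal.mem_bot] at hw
    simp [hw]
  refine mem_jacobson_of_forall_isNilpotent_mul fun a => ⟨N, ?_⟩
  have ha : a * decompose 𝒜 x m ∈ Submodule.span ℕ S := by
    rw [← sum_support_decompose 𝒜 a, Finset.sum_mul]
    exact Submodule.sum_mem _ fun i _ => Submodule.subset_span ⟨i, _, (decompose 𝒜 a i).2, rfl⟩
  simpa [Submodule.span_pow, hSN] using Submodule.pow_mem_pow _ ha N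

theorem Ideal.isHomogeneous_of_coe_decompose_mem {I : Ideal R}
    (h : ∀ x ∈ I, ∀ m, HasDegreeLE 𝒜 x m → (decompose 𝒜 x m : R) ∈ I) : I.IsHomogeneous 𝒜 := by
  suffices ∀ s : Finset ℤ, ∀ x ∈ I, (decompose 𝒜 x).support ⊆ s →
      ∀ i, (decompose 𝒜 x i : R) ∈ I from fun i x hx => this _ x hx subset_rfl i
  intro s
  induction s using Finset.induction_on_max with
  | empty =>
    intro x _ hs i
    rw [Finset.subset_empty, DFinsupp.support_eq_empty] at hs
    simp [hs]
  | insert a s has ih =>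
    intro x hx hs i
    have hxa : HasDegreeLE 𝒜 x a := fun j hj => by
      by_contra hne
      rcases Finset.mem_insert.mp (hs (DFinsupp.mem_support_iff.mpr hne)) with rfl | hj'
      · exact hj.ne rfl
      · exact (has j hj').not_gt hj
    have hlead := h x hx a hxa
    have hy : ∀ j, j ≠ a → (decompose 𝒜 (x - decompose 𝒜 x a) j : R) = decompose 𝒜 x j :=
      fun j hj => by
        rw [decompose_sub, DFinsupp.sub_apply, AddSubgroupClass.coe_sub,
          decompose_of_mem_ne 𝒜 (decompose 𝒜 x a).2 (Ne.symm hj), sub_zero]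
    by_cases hi : i = a
    · exact hi ▸ hlead
    refine hy i hi ▸ ih _ (I.sub_mem hx hlead) (fun j hj => ?_) i
    have hja : j ≠ a := by
      rintro rfl
      simp at hj
    rw [DFinsupp.mem_support_iff, ne_eq, ← ZeroMemClass.coe_eq_zero, hy j hja,
      ZeroMemClass.coe_eq_zero, ← ne_eq, ← DFinsupp.mem_support_iff] at hj
    exact (Finset.mem_insert.mp (hs hj)).resolve_left hja

theorem isHomogeneous_jacobson [IsArtinianRing R] : (Ring.jacobson R).IsHomogeneous 𝒜 :=
  Ideal.isHomogeneous_of_coe_decompose_mem fun _ hx _ hxm => coe_decompose_mem_jacobson hx hxm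

end Graded

theorem Matrix.sum_diag_block_eq_zero_of_isNilpotent {n ι K : Type*} [Fintype n] [DecidableEq n]
    [CommRing K] [IsReduced K] [DecidableEq ι] {X : Matrix n n K} (hX : IsNilpotent X) (deg : n → ι)
    (hblock : ∀ i j, deg i ≠ deg j → X i j = 0) (c : ι) :
    ∑ i with deg i = c, X i i = 0 := by
  set P : Matrix n n K := diagonal fun i => if deg i = c then 1 else 0
  have hcomm : Commute X P := by
    ext i j
    by_cases h : deg i = deg j
    · simp [P, h]
    · simp [P, hblock i j h]
  have := (isNilpotent_trace_of_isNilpotent (hcomm.isNilpotent_mul_right hX)).eq_zero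
  simpa [P, trace, Finset.sum_filter] using this

theorem Module.Basis.repr_eq_zero_of_mem {ι K A : Type*} [CommRing K] [AddCommGroup A] [Module K A]
    {𝒜 : ℤ → Submodule K A} [Decomposition 𝒜] (b : Module.Basis ι K A) {deg : ι → ℤ}
    (hb : ∀ k, b k ∈ 𝒜 (deg k)) {v : A} {j : ℤ} (hv : v ∈ 𝒜 j) {k : ι} (hk : deg k ≠ j) :
    b.repr v k = 0 := by
  let π : A →ₗ[K] A := (𝒜 j).subtype ∘ₗ DFinsupp.lapply j ∘ₗ (decomposeLinearEquiv 𝒜).toLinearMap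
  have hπ : ∀ a, π a = decompose 𝒜 a j := fun _ => rfl
  have hzero : b.coord k ∘ₗ π = 0 := b.ext fun k' => by
    by_cases h : deg k' = j
    · simp [hπ, decompose_of_mem_same 𝒜 (h ▸ hb k'),
        show k' ≠ k from fun e => hk (e ▸ h)]
    · simp [hπ, decompose_of_mem_ne 𝒜 (hb k') h]
  simpa [hπ, decompose_of_mem_same 𝒜 hv] using LinearMap.congr_fun hzero v

section Cellular

variable {K A Λ : Type*} [Field K] [Ring A] [Algebra K A] {M : Λ → Type*}
  (b : Module.Basis (Σ l, M l × M l) K A)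

/-- The matrix of `a` on the cell module `W(l)`, read off in column `S` of the cell basis; by
`IsLeftCellular.repr_mul` every column gives the same coefficients. -/
noncomputable def cellMatrix (l : Λ) : A →ₗ[K] Matrix (M l) (M l) K where
  toFun a := Matrix.of fun S' S => b.repr (a * b ⟨l, (S, S)⟩) ⟨l, (S', S)⟩
  map_add' x y := by ext; simp [add_mul]
  map_smul' c x := by ext; simp

variable {b}

theorem cellMatrix_apply (l : Λ) (a : A) (S' S : M l) :
    cellMatrix b l a S' S = b.repr (a * b ⟨l, (S, S)⟩) ⟨l, (S', S)⟩ := rfl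

theorem cellMatrix_one (l : Λ) : cellMatrix b l 1 = 1 := by
  ext S' S
  rw [cellMatrix_apply, one_mul, b.repr_self, Matrix.one_apply]
  by_cases h : S' = S <;> simp [h]

variable (b) in
def IsDualBasis (τ : A →ₗ[K] K) (D : ∀ l, M l → M l → A) : Prop :=
  ∀ (l μ : Λ) (S T : M l) (U V : M μ),
    τ (b ⟨l, (S, T)⟩ * D μ U V) = if (⟨l, (S, T)⟩ : Σ l, M l × M l) = ⟨μ, (V, U)⟩ then 1 else 0

variable [PartialOrder Λ]

variable (b) in
def cellLower (l : Λ) : Submodule K A :=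
  Submodule.span K {x | ∃ μ, μ < l ∧ ∃ U V : M μ, x = b ⟨μ, (U, V)⟩}

theorem repr_eq_zero_of_mem_cellLower {l : Λ} {y : A} (hy : y ∈ cellLower b l) (P Q : M l) :
    b.repr y ⟨l, (P, Q)⟩ = 0 := by
  induction hy using Submodule.span_induction with
  | mem x hx =>
    obtain ⟨μ, hμ, U, V, rfl⟩ := hx
    rw [b.repr_self]
    exact Finsupp.single_eq_of_ne fun h => hμ.ne' (congrArg Sigma.fst h)
  | zero => simp
  | add _ _ _ _ hx hy => simp [hx, hy]
  | smul _ _ _ hx => simp [hx]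

theorem cellLower_mono {μ l : Λ} (h : μ < l) : cellLower b μ ≤ cellLower b l :=
  Submodule.span_mono fun _ ⟨ξ, hξ, U, V, hx⟩ => ⟨ξ, hξ.trans h, U, V, hx⟩

theorem IsDualBasis.apply_mul_eq_zero_of_mem_cellLower {τ : A →ₗ[K] K} {D : ∀ l, M l → M l → A}
    (hD : IsDualBasis b τ D) {l : Λ} (S T : M l) {y : A} (hy : y ∈ cellLower b l) :
    τ (y * D l S T) = 0 := by
  induction hy using Submodule.span_induction with
  | mem x hx =>
    obtain ⟨μ, hμ, U, V, rfl⟩ := hx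
    rw [hD, if_neg fun h => hμ.ne (congrArg Sigma.fst h)]
  | zero => simp
  | add _ _ _ _ hx hy => simp [add_mul, hx, hy]
  | smul _ _ _ hx => simp [hx]

variable [∀ l, Fintype (M l)]

theorem repr_eq_of_sub_mem_cellLower {l : Λ} {y : A} {T : M l} {r : M l → K}
    (h : y - ∑ S', r S' • b ⟨l, (S', T)⟩ ∈ cellLower b l) (S' : M l) :
    b.repr y ⟨l, (S', T)⟩ = r S' := by
  have := repr_eq_zero_of_mem_cellLower h S' T
  rw [map_sub, Finsupp.sub_apply, sub_eq_zero] at this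
  rw [this, map_sum, Finsupp.finsetSum_apply, Finset.sum_eq_single S']
  · simp
  · intro c _ hc
    simp [hc]
  · simp

variable (b) in
def IsLeftCellular : Prop :=
  ∀ (a : A) (l : Λ), ∃ r : M l → M l → K, ∀ S T : M l,
    a * b ⟨l, (S, T)⟩ - ∑ S', r S' S • b ⟨l, (S', T)⟩ ∈ cellLower b l

namespace IsLeftCellular

theorem repr_mul (hb : IsLeftCellular b) (a : A) (l : Λ) (S T S' : M l) :
    b.repr (a * b ⟨l, (S, T)⟩) ⟨l, (S', T)⟩ = cellMatrix b l a S' S := by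
  obtain ⟨r, hr⟩ := hb a l
  rw [cellMatrix_apply, repr_eq_of_sub_mem_cellLower (hr S T),
    repr_eq_of_sub_mem_cellLower (hr S S)]

theorem mul_sub_mem (hb : IsLeftCellular b) (a : A) (l : Λ) (S T : M l) :
    a * b ⟨l, (S, T)⟩ - ∑ S', cellMatrix b l a S' S • b ⟨l, (S', T)⟩ ∈ cellLower b l := by
  obtain ⟨r, hr⟩ := hb a l
  have hcoeff : ∀ S', cellMatrix b l a S' S = r S' S := fun S' => by
    rw [← hb.repr_mul a l S T S', repr_eq_of_sub_mem_cellLower (hr S T)]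
  simp_rw [hcoeff]
  exact hr S T

theorem mul_mem_cellLower (hb : IsLeftCellular b) {l : Λ} (a : A) {y : A}
    (hy : y ∈ cellLower b l) : a * y ∈ cellLower b l := by
  induction hy using Submodule.span_induction with
  | mem x hx =>
    obtain ⟨μ, hμ, U, V, rfl⟩ := hx
    rw [← sub_add_cancel (a * b ⟨μ, (U, V)⟩) (∑ S', cellMatrix b μ a S' U • b ⟨μ, (S', V)⟩)]
    exact add_mem (cellLower_mono hμ (hb.mul_sub_mem a μ U V)) (Submodule.sum_mem _
      fun S' _ => Submodule.smul_mem _ _ (Submodule.subset_span ⟨μ, hμ, S', V, rfl⟩))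
  | zero => simp
  | add _ _ _ _ hx hy => simpa [mul_add] using add_mem hx hy
  | smul c _ _ hx => simpa using Submodule.smul_mem _ c hx

theorem cellMatrix_mul (hb : IsLeftCellular b) (l : Λ) (x y : A) :
    cellMatrix b l (x * y) = cellMatrix b l x * cellMatrix b l y := by
  ext S' S
  have hy := hb.mul_sub_mem y l S S
  rw [cellMatrix_apply, mul_assoc, ← sub_add_cancel (y * b ⟨l, (S, S)⟩)
    (∑ S'', cellMatrix b l y S'' S • b ⟨l, (S'', S)⟩), mul_add, map_add, Finsupp.add_apply,
    repr_eq_zero_of_mem_cellLower (hb.mul_mem_cellLower x hy), zero_add, Finset.mul_sum,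
    map_sum, Finsupp.finsetSum_apply, Matrix.mul_apply]
  refine Finset.sum_congr rfl fun S'' _ => ?_
  rw [mul_smul_comm, map_smul, Finsupp.smul_apply, hb.repr_mul, smul_eq_mul, mul_comm]

noncomputable def cellRep (hb : IsLeftCellular b) (l : Λ) : A →ₐ[K] Matrix (M l) (M l) K :=
  AlgHom.ofLinearMap (cellMatrix b l) (cellMatrix_one l) (hb.cellMatrix_mul l)

theorem cellRep_apply (hb : IsLeftCellular b) (l : Λ) (a : A) :
    hb.cellRep l a = cellMatrix b l a := rfl

theorem apply_mul_basis_mul_dual (hb : IsLeftCellular b) {τ : A →ₗ[K] K}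
    {D : ∀ l, M l → M l → A} (hD : IsDualBasis b τ D) (a : A) (l : Λ) (S : M l) :
    τ (a * (b ⟨l, (S, S)⟩ * D l S S)) = hb.cellRep l a S S := by
  rw [← mul_assoc, ← sub_add_cancel (a * b ⟨l, (S, S)⟩)
    (∑ S', cellMatrix b l a S' S • b ⟨l, (S', S)⟩), add_mul, map_add,
    hD.apply_mul_eq_zero_of_mem_cellLower S S (hb.mul_sub_mem a l S S), zero_add,
    Finset.sum_mul, map_sum, Finset.sum_eq_single S]
  · simp [hD l l S S S S, cellRep_apply]
  · intro S' _ hS'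
    simp [hD l l S' S S S, hS']
  · simp

variable {𝒜 : ℤ → Submodule K A} [GradedAlgebra 𝒜] {deg : ∀ l, M l → ℤ}

theorem cellRep_apply_eq_zero_of_mem (hb : IsLeftCellular b)
    (hhom : ∀ l S T, b ⟨l, (S, T)⟩ ∈ 𝒜 (deg l S + deg l T)) {a : A} {i : ℤ} (ha : a ∈ 𝒜 i)
    {l : Λ} {S' S : M l} (h : deg l S' ≠ deg l S + i) : hb.cellRep l a S' S = 0 :=
  b.repr_eq_zero_of_mem (deg := fun k => deg k.1 k.2.1 + deg k.1 k.2.2)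
    (fun k => hhom k.1 k.2.1 k.2.2) (SetLike.mul_mem_graded ha (hhom l S S)) (by dsimp; omega)

theorem cellRep_apply_self_eq_decompose_zero (hb : IsLeftCellular b)
    (hhom : ∀ l S T, b ⟨l, (S, T)⟩ ∈ 𝒜 (deg l S + deg l T)) (x : A) (l : Λ) (S : M l) :
    hb.cellRep l x S S = hb.cellRep l (decompose 𝒜 x 0) S S := by
  conv_lhs => rw [← sum_support_decompose 𝒜 x]
  rw [map_sum, Matrix.sum_apply, Finset.sum_eq_single 0]
  · intro i _ hi
    exact hb.cellRep_apply_eq_zero_of_mem hhom (decompose 𝒜 x i).2 (by omega)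
  · intro h0
    rw [DFinsupp.notMem_support_iff.mp h0]
    simp

theorem sum_cellRep_apply_self_eq_zero [FiniteDimensional K A] (hb : IsLeftCellular b)
    (hhom : ∀ l S T, b ⟨l, (S, T)⟩ ∈ 𝒜 (deg l S + deg l T)) {x : A}
    (hx : x ∈ Ring.jacobson A) (l : Λ) (c : ℤ) :
    ∑ S with deg l S = c, hb.cellRep l x S S = 0 := by
  have := IsArtinianRing.of_finite K A
  have hx0 : IsNilpotent (decompose 𝒜 x 0 : A) :=
    isNilpotent_of_mem_jacobson (isHomogeneous_jacobson (𝒜 := 𝒜) 0 hx)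
  simp_rw [hb.cellRep_apply_self_eq_decompose_zero hhom x l]
  exact Matrix.sum_diag_block_eq_zero_of_isNilpotent (hx0.map (hb.cellRep l)) (deg l)
    (fun S' S h => hb.cellRep_apply_eq_zero_of_mem hhom (decompose 𝒜 x 0).2 (by rwa [add_zero])) c

theorem apply_eq_zero_of_mem_jacobson [FiniteDimensional K A] (hb : IsLeftCellular b)
    {τ : A →ₗ[K] K} {D : ∀ l, M l → M l → A} (hD : IsDualBasis b τ D)
    (hhom : ∀ l S T, b ⟨l, (S, T)⟩ ∈ 𝒜 (deg l S + deg l T)) {e : Λ → ℤ → A}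
    (he : ∀ l c, e l c = ∑ S with deg l S = c, b ⟨l, (S, S)⟩ * D l S S)
    (h1 : (1 : A) ∈ Submodule.span K {z | ∃ l c, z = e l c}) {x : A}
    (hx : x ∈ Ring.jacobson A) : τ x = 0 := by
  suffices ∀ z ∈ Submodule.span K {z | ∃ l c, z = e l c}, τ (x * z) = 0 by
    simpa using this 1 h1
  intro z hz
  induction hz using Submodule.span_induction with
  | mem z hz =>
    obtain ⟨l, c, rfl⟩ := hz
    rw [he, Finset.mul_sum, map_sum]
    simp_rw [hb.apply_mul_basis_mul_dual hD]
    exact hb.sum_cellRep_apply_self_eq_zero hhom hx l c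
  | zero => simp
  | add _ _ _ _ hz hz' => simp [mul_add, hz, hz']
  | smul _ _ _ hz => simp [hz]

end IsLeftCellular

end Cellular

/-- Lemma 5.6: if `L_gr(A) = Z_A(A₀)` then `A` is semisimple. -/
theorem stmt15
    {K A : Type} [Field K] [Ring A] [Algebra K A] [FiniteDimensional K A]
    {Λ : Type} [PartialOrder Λ] [Fintype Λ]
    {M : Λ → Type} [∀ l : Λ, Fintype (M l)]
    (C : ∀ l : Λ, M l → M l → A)
    (bas : Module.Basis (Σ l : Λ, M l × M l) K A)
    (hbas : ∀ (l : Λ) (S T : M l), bas ⟨l, (S, T)⟩ = C l S T)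
    (star : A →ₗ[K] A)
    (hstar : ∀ a b : A, star (a * b) = star b * star a)
    (hstarC : ∀ (l : Λ) (S T : M l), star (C l S T) = C l T S)
    (hcell : ∀ (a : A) (l : Λ), ∃ r : M l → M l → K, ∀ S T : M l,
      a * C l S T - ∑ S' : M l, r S' S • C l S' T ∈
        Submodule.span K {x : A | ∃ μ : Λ, μ < l ∧ ∃ U V : M μ, x = C μ U V})

    (τ : A →ₗ[K] K)
    (hτsym : ∀ a b : A, τ (a * b) = τ (b * a))
    (hτnd : ∀ a : A, a ≠ 0 → ∃ b : A, τ (a * b) ≠ 0)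
    (D : ∀ l : Λ, M l → M l → A)
    (hdual : ∀ (l μ : Λ) (S T : M l) (U V : M μ),
      τ (C l S T * D μ U V) =
        if (⟨l, (S, T)⟩ : Σ l : Λ, M l × M l) = ⟨μ, (V, U)⟩ then 1 else 0)
    (𝒜 : ℤ → Submodule K A) [GradedAlgebra 𝒜]
    (deg : ∀ l : Λ, M l → ℤ)
    (hhom : ∀ (l : Λ) (S T : M l), C l S T ∈ 𝒜 (deg l S + deg l T))
    (d : ℤ)
    (hτhom : ∀ i : ℤ, i ≠ -d → ∀ a ∈ 𝒜 i, τ a = 0)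
    (e : ∀ _ : Λ, ℤ → A)
    (he : ∀ (l : Λ) (c : ℤ),
      e l c = ∑ S ∈ Finset.univ.filter (fun S : M l => deg l S = c), C l S S * D l S S)
    (hL : Submodule.span K {z : A | ∃ (l : Λ) (c : ℤ), z = e l c} =
      Subalgebra.toSubmodule (Subalgebra.centralizer K (𝒜 0 : Set A))) :
    IsSemisimpleRing A := by
  obtain rfl : C = fun l S T => bas ⟨l, (S, T)⟩ := by
    funext l S T
    exact (hbas l S T).symm
  have := IsArtinianRing.of_finite K A
  have h1 : (1 : A) ∈ Submodule.span K {z | ∃ l c, z = e l c} :=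
    hL ▸ one_mem (Subalgebra.centralizer K _)
  refine IsArtinianRing.isSemisimpleRing_iff_jacobson.mpr (eq_bot_iff.mpr fun x hx => ?_)
  rw [Submodule.mem_bot]
  by_contra hx0
  obtain ⟨y, hy⟩ := hτnd x hx0
  have hb : IsLeftCellular bas := hcell
  exact hy (hb.apply_eq_zero_of_mem_jacobson hdual hhom he h1 (Ideal.mul_mem_right y _ hx))
end

section
/- Let A = ⊕_i M_{n_i}(K) be a finite dimensional semisimple K-algebra with at least one n_i > 1. Then A admits a structure of a graded symmetric cellular algebra with a non-trivial grading (i.e. some homogeneous component of nonzero degree is nonzero) and a homogeneous symmetrizing trace of degree 0. -/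
/-!
Grade the `(a, b)` entry of each block by `d a - d b`, for any degree function `d` on its rows:
this is an algebra grading, and the ordinary trace vanishes off degree `0` because diagonal
entries have degree `0`. With `C(S, T) = e_{S, rev T}` and `d (rev a) = -d a` (e.g.
`d a = 2a - (n - 1)`), `C(S, T)` has degree `d S + d T`. The `C(S, T)` are swapped by the
anti-involution `x ↦ J xᵀ J` and form a cellular basis with one cell per block: left
multiplication acts on the first index only, `a C(S, T) = ∑ a_{S' S} C(S', T)` with no error
term, so the cells may be ordered discretely.
-/

open Matrix

theorem Matrix.mul_single_one_eq_sum {R k : Type*} [Semiring R] [Fintype k] [DecidableEq k]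
    (M : Matrix k k R) (S U : k) : M * single S U 1 = ∑ S', M S' S • single S' U 1 := by
  ext p q
  by_cases hq : U = q <;> simp [mul_apply, single_apply, Matrix.sum_apply, hq]

namespace GradedCellular

section BlockTrace

variable {R ι : Type*} [CommSemiring R] [Fintype ι] {m : ι → Type*} [∀ i, Fintype (m i)]

def blockTrace : (∀ i, Matrix (m i) (m i) R) →ₗ[R] R :=
  ∑ i, traceLinearMap (m i) R R ∘ₗ LinearMap.proj i

theorem blockTrace_apply (x : ∀ i, Matrix (m i) (m i) R) : blockTrace x = ∑ i, (x i).trace := by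
  simp [blockTrace]

theorem blockTrace_mul_comm (x y : ∀ i, Matrix (m i) (m i) R) :
    blockTrace (x * y) = blockTrace (y * x) := by
  simp only [blockTrace_apply, Pi.mul_apply]
  exact Finset.sum_congr rfl fun i _ => trace_mul_comm _ _

theorem blockTrace_single [DecidableEq ι] (i : ι) (M : Matrix (m i) (m i) R) :
    blockTrace (Pi.single i M) = M.trace := by
  rw [blockTrace_apply, Fintype.sum_eq_single i fun j hj => by simp [Pi.single_eq_of_ne hj],
    Pi.single_eq_same]

theorem exists_blockTrace_mul_ne_zero [DecidableEq ι] [∀ i, DecidableEq (m i)]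
    {x : ∀ i, Matrix (m i) (m i) R} (hx : x ≠ 0) : ∃ y, blockTrace (x * y) ≠ 0 := by
  obtain ⟨i, a, b, hab⟩ : ∃ i a b, x i a b ≠ 0 := by
    by_contra! h
    exact hx (funext fun i => Matrix.ext (h i))
  refine ⟨Pi.single i (single b a 1), ?_⟩
  rwa [← Pi.single_mul_right, blockTrace_single, trace_mul_single, MulOpposite.op_one, one_smul]

end BlockTrace

section EntryGrading

variable {R G ι : Type*} [CommRing R] [AddCommGroup G] {m : ι → Type*}

def entryGrading (d : ∀ i, m i → G) (g : G) : Submodule R (∀ i, Matrix (m i) (m i) R) where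
  carrier := {x | ∀ i a b, d i a - d i b ≠ g → x i a b = 0}
  add_mem' hx hy i a b h := by simp [hx i a b h, hy i a b h]
  zero_mem' _ _ _ _ := rfl
  smul_mem' c x hx i a b h := by simp [hx i a b h]

variable {d : ∀ i, m i → G}

theorem iSupIndep_entryGrading : iSupIndep (entryGrading (R := R) d) := by
  intro g
  let V : Submodule R (∀ i, Matrix (m i) (m i) R) :=
    { carrier := {x | ∀ i a b, d i a - d i b = g → x i a b = 0}
      add_mem' := fun hx hy i a b h => by simp [hx i a b h, hy i a b h]
      zero_mem' := fun _ _ _ _ => rfl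
      smul_mem' := fun c x hx i a b h => by simp [hx i a b h] }
  have hV : ⨆ (j) (_ : j ≠ g), entryGrading d j ≤ V :=
    iSup₂_le fun j hj x hx i a b hab => hx i a b (hab ▸ hj.symm)
  refine Disjoint.mono_right hV (Submodule.disjoint_def.2 fun x hx hx' => ?_)
  funext i a b
  by_cases hab : d i a - d i b = g
  exacts [hx' i a b hab, hx i a b hab]

theorem blockTrace_eq_zero_of_mem_entryGrading [Fintype ι] [∀ i, Fintype (m i)] {g : G}
    (hg : g ≠ 0) {x : ∀ i, Matrix (m i) (m i) R} (hx : x ∈ entryGrading d g) :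
    blockTrace x = 0 := by
  rw [blockTrace_apply]
  exact Finset.sum_eq_zero fun i _ =>
    Finset.sum_eq_zero fun a _ => hx i a a (by rwa [sub_self, ne_comm])

variable [DecidableEq ι] [∀ i, DecidableEq (m i)]

theorem single_mem_entryGrading (i : ι) (a b : m i) (c : R) :
    Pi.single i (single a b c) ∈ entryGrading d (d i a - d i b) := by
  intro j a' b' h
  rcases eq_or_ne j i with rfl | hj
  · rw [Pi.single_eq_same, single_apply_of_ne]
    rintro ⟨rfl, rfl⟩
    exact h rfl
  · rw [Pi.single_eq_of_ne hj]
    rfl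

theorem entryGrading_ne_bot [Nontrivial R] (i : ι) (a b : m i) :
    entryGrading (R := R) d (d i a - d i b) ≠ ⊥ := by
  refine (Submodule.ne_bot_iff _).2
    ⟨Pi.single i (single a b 1), single_mem_entryGrading i a b 1, fun h => ?_⟩
  simpa using congr_fun (congr_fun (congr_fun h i) a) b

variable [Fintype ι] [∀ i, Fintype (m i)]

theorem iSup_entryGrading : ⨆ g, entryGrading (R := R) d g = ⊤ := by
  refine eq_top_iff.2 fun x _ => ?_
  rw [← Finset.univ_sum_single x]
  refine Submodule.sum_mem _ fun i _ => ?_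
  induction x i using Matrix.induction_on' with
  | h_zero => simp
  | h_add p q hp hq => rw [Pi.single_add]; exact add_mem hp hq
  | h_std_basis a b c => exact Submodule.mem_iSup_of_mem _ (single_mem_entryGrading i a b c)

theorem isInternal_entryGrading [DecidableEq G] :
    DirectSum.IsInternal (entryGrading (R := R) d) :=
  DirectSum.isInternal_submodule_of_iSupIndep_of_iSup_eq_top iSupIndep_entryGrading
    iSup_entryGrading

instance : SetLike.GradedMonoid (entryGrading (R := R) d) where
  one_mem i a b h := by
    have hab : a ≠ b := by rintro rfl; exact h (sub_self _)
    simp [one_apply_ne hab]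
  mul_mem g g' x y hx hy i a b h := by
    refine Finset.sum_eq_zero fun c _ => ?_
    dsimp only
    by_cases hc : d i a - d i c = g
    · rw [hy i c b fun hc' => h (by rw [← hc, ← hc', sub_add_sub_cancel]), mul_zero]
    · rw [hx i a c hc, zero_mul]

noncomputable abbrev entryGradedAlgebra [DecidableEq G] :
    GradedAlgebra (entryGrading (R := R) d) :=
  { isInternal_entryGrading.chooseDecomposition _ with }

end EntryGrading

section Cells

variable {R ι : Type*} [CommRing R] {n : ι → ℕ}

def centeredDegree (n : ℕ) (a : Fin n) : ℤ := 2 * a - (n - 1)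

theorem centeredDegree_rev {n : ℕ} (a : Fin n) :
    centeredDegree n a.rev = -centeredDegree n a := by
  have := a.is_lt
  simp only [centeredDegree, Fin.val_rev]
  push_cast [Nat.cast_sub (by omega : (a : ℕ) + 1 ≤ n)]
  ring

def revTranspose : (∀ i, Matrix (Fin (n i)) (Fin (n i)) R) →ₗ[R]
    ∀ i, Matrix (Fin (n i)) (Fin (n i)) R where
  toFun x i := (x i)ᵀ.submatrix Fin.revPerm Fin.revPerm
  map_add' x y := by ext; simp
  map_smul' c x := by ext; simp

theorem revTranspose_mul (x y : ∀ i, Matrix (Fin (n i)) (Fin (n i)) R) :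
    revTranspose (x * y) = revTranspose y * revTranspose x := by
  funext i
  simp [revTranspose, transpose_mul, submatrix_mul_equiv]

variable [DecidableEq ι]

def cellUnit (l : ι) (S T : Fin (n l)) : ∀ i, Matrix (Fin (n i)) (Fin (n i)) R :=
  Pi.single l (single S T.rev 1)

theorem cellUnit_mem_entryGrading (l : ι) (S T : Fin (n l)) :
    cellUnit (R := R) l S T ∈ entryGrading (fun i => centeredDegree (n i))
      (centeredDegree (n l) S + centeredDegree (n l) T) := by
  have := single_mem_entryGrading (R := R) (d := fun i => centeredDegree (n i)) l S T.rev 1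
  rwa [centeredDegree_rev, sub_neg_eq_add] at this

theorem mul_cellUnit (a : ∀ i, Matrix (Fin (n i)) (Fin (n i)) R) (l : ι) (S T : Fin (n l)) :
    a * cellUnit l S T = ∑ S', a l S' S • cellUnit l S' T := by
  simp only [cellUnit, ← Pi.single_mul_right, ← Pi.single_smul, mul_single_one_eq_sum]
  exact map_sum (AddMonoidHom.single (fun i => Matrix (Fin (n i)) (Fin (n i)) R) l) _ _

noncomputable def cellBasis [Fintype ι] :
    Module.Basis (Σ l, Fin (n l) × Fin (n l)) R (∀ i, Matrix (Fin (n i)) (Fin (n i)) R) :=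
  Pi.basis fun _ => (stdBasis R _ _).reindex (Equiv.prodCongr (Equiv.refl _) Fin.revPerm)

theorem cellBasis_apply [Fintype ι] (l : ι) (S T : Fin (n l)) :
    cellBasis (R := R) ⟨l, (S, T)⟩ = cellUnit l S T := by
  simp [cellBasis, cellUnit, stdBasis_eq_single]

theorem revTranspose_cellUnit (l : ι) (S T : Fin (n l)) :
    revTranspose (cellUnit (R := R) l S T) = cellUnit l T S := by
  funext i
  rcases eq_or_ne i l with rfl | h
  · simp [revTranspose, cellUnit]
  · simp [revTranspose, cellUnit, Pi.single_eq_of_ne h]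

end Cells

abbrev discretePartialOrder (α : Type*) : PartialOrder α where
  le := Eq
  le_refl := Eq.refl
  le_trans _ _ _ := Eq.trans
  le_antisymm _ _ h _ := h

end GradedCellular

open GradedCellular

theorem stmt19_general {K : Type} [Field K] {ι : Type} [Fintype ι]
    (n : ι → ℕ) (hbig : ∃ i, 1 < n i) :
    ∃ 𝒜 : ℤ → Submodule K (∀ i, Matrix (Fin (n i)) (Fin (n i)) K),
      Nonempty (GradedAlgebra 𝒜) ∧
      (∃ m : ℤ, m ≠ 0 ∧ 𝒜 m ≠ ⊥) ∧
      ∃ (Λ : Type) (po : PartialOrder Λ) (_ : Fintype Λ)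
        (M : Λ → Type) (fM : ∀ l : Λ, Fintype (M l))
        (C : ∀ l : Λ, M l → M l → (∀ i, Matrix (Fin (n i)) (Fin (n i)) K))
        (bas : Module.Basis (Σ l : Λ, M l × M l) K (∀ i, Matrix (Fin (n i)) (Fin (n i)) K)),
        (∀ (l : Λ) (S T : M l), bas ⟨l, (S, T)⟩ = C l S T) ∧
        (∃ star : (∀ i, Matrix (Fin (n i)) (Fin (n i)) K) →ₗ[K]
            (∀ i, Matrix (Fin (n i)) (Fin (n i)) K),
          (∀ a b, star (a * b) = star b * star a) ∧
          (∀ (l : Λ) (S T : M l), star (C l S T) = C l T S)) ∧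
        (∀ (a : ∀ i, Matrix (Fin (n i)) (Fin (n i)) K) (l : Λ),
          ∃ r : M l → M l → K, ∀ S T : M l,
            a * C l S T - ∑ S' ∈ (fM l).elems, r S' S • C l S' T ∈
              Submodule.span K
                {x : ∀ i, Matrix (Fin (n i)) (Fin (n i)) K |
                  ∃ μ : Λ, po.lt μ l ∧ ∃ U V : M μ, x = C μ U V}) ∧
        (∃ deg : ∀ l : Λ, M l → ℤ,
          ∀ (l : Λ) (S T : M l), C l S T ∈ 𝒜 (deg l S + deg l T)) ∧
        (∃ τ : (∀ i, Matrix (Fin (n i)) (Fin (n i)) K) →ₗ[K] K,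
          (∀ a b, τ (a * b) = τ (b * a)) ∧
          (∀ a, a ≠ 0 → ∃ b, τ (a * b) ≠ 0) ∧
          (∀ m : ℤ, m ≠ 0 → ∀ a ∈ 𝒜 m, τ a = 0)) := by
  classical
  obtain ⟨i₀, hi₀⟩ := hbig
  let d : ∀ i, Fin (n i) → ℤ := fun i => centeredDegree (n i)
  have hgrade : entryGrading (R := K) d 2 ≠ ⊥ := by
    have h := entryGrading_ne_bot (R := K) (d := d) i₀ ⟨1, hi₀⟩ ⟨0, by omega⟩
    rwa [show d i₀ ⟨1, hi₀⟩ - d i₀ ⟨0, _⟩ = 2 by simp [d, centeredDegree]; ring] at h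
  refine ⟨entryGrading d, ⟨entryGradedAlgebra⟩, ⟨2, two_ne_zero, hgrade⟩, ι,
    discretePartialOrder ι, inferInstance, fun l => Fin (n l), fun _ => inferInstance, cellUnit,
    cellBasis, cellBasis_apply, ⟨revTranspose, revTranspose_mul, revTranspose_cellUnit⟩,
    fun a l => ⟨fun S' S => a l S' S, fun S T => ?_⟩,
    ⟨fun l => centeredDegree (n l), cellUnit_mem_entryGrading⟩,
    blockTrace, blockTrace_mul_comm, fun _ => exists_blockTrace_mul_ne_zero,
    fun _ hg _ => blockTrace_eq_zero_of_mem_entryGrading hg⟩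
  convert Submodule.zero_mem _ using 1
  exact sub_eq_zero.2 (mul_cellUnit a l S T)

/-- Proposition 5.3: a finite dimensional semisimple algebra `A = ⊕ M_{nᵢ}(K)` with
some `nᵢ > 1` admits a structure of graded symmetric cellular algebra with a
non-trivial grading and a homogeneous symmetrizing trace of degree `0`. -/
theorem stmt19 {K : Type} [Field K] {ι : Type} [Fintype ι] [DecidableEq ι]
    (n : ι → ℕ) (hn : ∀ i, 1 ≤ n i) (hbig : ∃ i, 1 < n i) :
    ∃ 𝒜 : ℤ → Submodule K (∀ i, Matrix (Fin (n i)) (Fin (n i)) K),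
      Nonempty (GradedAlgebra 𝒜) ∧
      (∃ m : ℤ, m ≠ 0 ∧ 𝒜 m ≠ ⊥) ∧
      ∃ (Λ : Type) (po : PartialOrder Λ) (_ : Fintype Λ)
        (M : Λ → Type) (fM : ∀ l : Λ, Fintype (M l))
        (C : ∀ l : Λ, M l → M l → (∀ i, Matrix (Fin (n i)) (Fin (n i)) K))
        (bas : Module.Basis (Σ l : Λ, M l × M l) K (∀ i, Matrix (Fin (n i)) (Fin (n i)) K)),
        (∀ (l : Λ) (S T : M l), bas ⟨l, (S, T)⟩ = C l S T) ∧
        (∃ star : (∀ i, Matrix (Fin (n i)) (Fin (n i)) K) →ₗ[K]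
            (∀ i, Matrix (Fin (n i)) (Fin (n i)) K),
          (∀ a b, star (a * b) = star b * star a) ∧
          (∀ (l : Λ) (S T : M l), star (C l S T) = C l T S)) ∧
        (∀ (a : ∀ i, Matrix (Fin (n i)) (Fin (n i)) K) (l : Λ),
          ∃ r : M l → M l → K, ∀ S T : M l,
            a * C l S T - ∑ S' ∈ (fM l).elems, r S' S • C l S' T ∈
              Submodule.span K
                {x : ∀ i, Matrix (Fin (n i)) (Fin (n i)) K |
                  ∃ μ : Λ, po.lt μ l ∧ ∃ U V : M μ, x = C μ U V}) ∧
        (∃ deg : ∀ l : Λ, M l → ℤ,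
          ∀ (l : Λ) (S T : M l), C l S T ∈ 𝒜 (deg l S + deg l T)) ∧
        (∃ τ : (∀ i, Matrix (Fin (n i)) (Fin (n i)) K) →ₗ[K] K,
          (∀ a b, τ (a * b) = τ (b * a)) ∧
          (∀ a, a ≠ 0 → ∃ b, τ (a * b) ≠ 0) ∧
          (∀ m : ℤ, m ≠ 0 → ∀ a ∈ 𝒜 m, τ a = 0)) :=
  stmt19_general n hbig
end
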